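/- arXiv:1607.03815 — 9 statements merged into one kernel-verified Lean document; each statement's English description precedes it below -/
import Mathlib

section
/- Global error inequality: let F : ℝ^d → ℝ be convex with nonempty convex compact minimizer set Ω_*, minimum value F_*, and ε > 0. For any x, letting x_ε† be the Euclidean projection of x onto the ε-sublevel set S_ε = {z : F(z) ≤ F_* + ε}, one has ‖x - x_ε†‖ ≤ (dist(x_ε†, Ω_*)/ε) · (F(x) - F(x_ε†)). -/
open scoped RealInnerProductSpace

/-- Global error inequality. For convex `F : ℝ^d → ℝ` with nonempty convex
compact minimizer set `Ω*`, minimum value `Fstar` and `ε > 0`, letting `xdag` be the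
Euclidean projection of `x` onto the `ε`-sublevel set `S_ε = {z | F z ≤ Fstar + ε}`,
one has `‖x - xdag‖ ≤ (dist(xdag, Ω*)/ε) * (F x - F xdag)`. -/
theorem global_error_inequality
    {d : ℕ} (F : EuclideanSpace ℝ (Fin d) → ℝ)
    (hF : ConvexOn ℝ Set.univ F)
    (Ωstar : Set (EuclideanSpace ℝ (Fin d))) (Fstar : ℝ)
    (hΩ : Ωstar = {z | ∀ y, F z ≤ F y})
    (hΩne : Ωstar.Nonempty) (hΩconv : Convex ℝ Ωstar) (hΩcpt : IsCompact Ωstar)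
    (hFstar : ∀ z ∈ Ωstar, F z = Fstar)
    (ε : ℝ) (hε : 0 < ε)
    (x xdag : EuclideanSpace ℝ (Fin d))
    (hmem : xdag ∈ {z | F z ≤ Fstar + ε})
    (hproj : ∀ z ∈ {z : EuclideanSpace ℝ (Fin d) | F z ≤ Fstar + ε}, ‖xdag - x‖ ≤ ‖z - x‖) :
    ‖x - xdag‖ ≤ (Metric.infDist xdag Ωstar / ε) * (F x - F xdag) := by
  obtain ⟨w, hw, hwd⟩ := hΩcpt.exists_infDist_eq_dist hΩne xdag
  have hFw : F w = Fstar := hFstar w hw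
  have hmin : ∀ y, F w ≤ F y := by rw [hΩ] at hw; exact hw
  have hmemx : F xdag ≤ Fstar + ε := hmem
  by_cases hx : F x ≤ Fstar + ε
  · have h0 : ‖xdag - x‖ ≤ 0 := by simpa using hproj x hx
    have hxx : xdag = x := by
      have h1 : ‖xdag - x‖ = 0 := le_antisymm h0 (norm_nonneg _)
      have := norm_eq_zero.mp h1
      exact sub_eq_zero.mp this
    subst hxx
    simp
  · push_neg at hx
    set M : ℝ := F x - Fstar with hM
    have hMε : ε < M := by
      have := hmin x
      simp only [hM]
      linarith [hFw ▸ this]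
    have hM0 : 0 < M := lt_trans hε hMε
    set a : ℝ := ε / M with ha
    have ha0 : 0 < a := div_pos hε hM0
    have ha1 : a < 1 := (div_lt_one hM0).mpr hMε
    set b : ℝ := 1 - a with hb
    have hb0 : 0 ≤ b := by simp only [hb]; linarith
    have haM : a * M = ε := div_mul_cancel₀ ε hM0.ne'
    have hy : F (a • x + b • w) ≤ Fstar + ε := by
      have hconv := hF.2 (Set.mem_univ x) (Set.mem_univ w) ha0.le hb0 (by simp [hb])
      have key : a * F x + b * F w = Fstar + ε := by
        rw [hFw]
        have : a * F x + b * Fstar = Fstar + a * M := by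
          simp only [hb, hM]; ring
        rw [this, haM]
      simp only [smul_eq_mul] at hconv
      linarith [hconv]
    have hproj' := hproj _ hy
    have hsub : a • x + b • w - x = b • (w - x) := by
      simp only [hb]; module
    have hnorm : ‖a • x + b • w - x‖ = b * ‖w - x‖ := by
      rw [hsub, norm_smul, Real.norm_eq_abs, abs_of_nonneg hb0]
    set N : ℝ := ‖xdag - x‖ with hN
    set D : ℝ := ‖w - xdag‖ with hD
    have hD0 : 0 ≤ D := norm_nonneg _
    have htri : ‖w - x‖ ≤ D + N := by
      have := norm_sub_le_norm_sub_add_norm_sub w xdag x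
      simpa [hD, hN] using this
    have hkey : N ≤ b * (D + N) := by
      calc N ≤ b * ‖w - x‖ := by rw [← hnorm]; exact hproj'
        _ ≤ b * (D + N) := mul_le_mul_of_nonneg_left htri hb0
    have haN : a * N ≤ b * D := by
      have : (1 - b) * N ≤ b * D := by nlinarith
      simpa [hb] using this
    have hεN : ε * N ≤ (M - ε) * D := by
      have h1 := mul_le_mul_of_nonneg_left haN hM0.le
      have h2 : M * (a * N) = ε * N := by
        rw [show M * (a * N) = a * M * N by ring, haM]
      have h3 : M * (b * D) = (M - ε) * D := by
        simp only [hb]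
        rw [show M * ((1 - a) * D) = (M - a * M) * D by ring, haM]
      rw [h2, h3] at h1
      exact h1
    have hdist : Metric.infDist xdag Ωstar = D := by
      rw [hwd, dist_eq_norm, norm_sub_rev]
    rw [hdist, norm_sub_rev, div_mul_eq_mul_div, le_div_iff₀ hε]
    have hQ : M - ε ≤ F x - F xdag := by simp only [hM]; linarith
    nlinarith [mul_le_mul_of_nonneg_right hQ hD0]
end

section
/- Global error inequality in p-norm: let p ∈ (1,2], F : ℝ^d → ℝ convex with nonempty convex compact minimizer set Ω_* and minimum F_*, ε > 0. For any x, let x_ε† be a minimizer of ‖z - x‖_p² over the ε-sublevel set S_ε = {z : F(z) ≤ F_* + ε}. Then ‖x - x_ε†‖_p ≤ (dist_p(x_ε†, Ω_*)/ε) · (F(x) - F(x_ε†)), where dist_p(z, Ω_*) = min_{w ∈ Ω_*} ‖z - w‖_p. -/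
/-!
Let `y` be a nearest point to `x` in the sublevel set `{F ≤ r}` and let `w` satisfy
`F w < r < F x`. By convexity the point of the segment `[w, x]` at parameter
`t = (r - F w) / (F x - F w)` lies in the sublevel set, so `‖y - x‖ ≤ (1 - t) ‖w - x‖`, and the
triangle inequality through `y` turns this into `(r - F w) ‖y - x‖ ≤ (F x - r) ‖y - w‖`.
With `r = F_* + ε` and `w ∈ Ω_*`, the bound `F y ≤ r` gives `F x - r ≤ F x - F y`, and the
infimum over `w` gives the theorem; if `F x ≤ r` then `y = x` and both sides vanish.
-/

/-- The ℓ_p norm on `ℝ^d`. -/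
noncomputable def pNorm {d : ℕ} (p : ℝ) (x : Fin d → ℝ) : ℝ :=
  (∑ i, |x i| ^ p) ^ (1 / p)

/-- Distance to a set measured in the ℓ_p norm. -/
noncomputable def pDist {d : ℕ} (p : ℝ) (x : Fin d → ℝ) (S : Set (Fin d → ℝ)) : ℝ :=
  sInf {r | ∃ w ∈ S, r = pNorm p (x - w)}

theorem ConvexOn.mul_seminorm_sub_le_of_isMinOn {E : Type*} [AddCommGroup E] [Module ℝ E]
    (N : Seminorm ℝ E) {F : E → ℝ} (hF : ConvexOn ℝ Set.univ F) {r : ℝ} {x y w : E}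
    (hw : F w < r) (hx : r < F x) (hy : IsMinOn (fun z ↦ N (z - x)) {z | F z ≤ r} y) :
    (r - F w) * N (y - x) ≤ (F x - r) * N (y - w) := by
  have hc : 0 < F x - F w := by linarith
  obtain ⟨t, ht⟩ : ∃ t, t * (F x - F w) = r - F w := ⟨_, div_mul_cancel₀ _ hc.ne'⟩
  have ht0 : 0 < t := pos_of_mul_pos_left (ht ▸ sub_pos.2 hw) hc.le
  have ht1 : t < 1 := by nlinarith
  have hz : F ((1 - t) • w + t • x) ≤ r := by
    have := hF.2 (Set.mem_univ w) (Set.mem_univ x) (by linarith) ht0.le (sub_add_cancel 1 t)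
    simp only [smul_eq_mul] at this
    linarith
  have hzx : (1 - t) • w + t • x - x = (1 - t) • (w - x) := by module
  have hyx : N (y - x) ≤ (1 - t) * (N (y - w) + N (y - x)) :=
    calc N (y - x) ≤ N ((1 - t) • w + t • x - x) := isMinOn_iff.1 hy _ hz
      _ = (1 - t) * N (w - x) := by
        rw [hzx, map_smul_eq_mul, Real.norm_of_nonneg (by linarith)]
      _ ≤ (1 - t) * (N (y - w) + N (y - x)) := by
        gcongr
        rw [map_sub_rev N y w, ← sub_add_sub_cancel w y x]
        exact map_add_le_add N _ _
  have key : t * N (y - x) ≤ (1 - t) * N (y - w) := by linarith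
  calc (r - F w) * N (y - x) = (F x - F w) * (t * N (y - x)) := by rw [← ht]; ring
    _ ≤ (F x - F w) * ((1 - t) * N (y - w)) := by gcongr
    _ = (F x - r) * N (y - w) := by linear_combination (-N (y - w)) * ht

theorem pNorm_eq_norm_toLp {d : ℕ} {p : ℝ} (hp : 0 < p) (v : Fin d → ℝ) :
    pNorm p v = ‖WithLp.toLp (ENNReal.ofReal p) v‖ := by
  rw [PiLp.norm_eq_sum (by rwa [ENNReal.toReal_ofReal hp.le])]
  simp [pNorm, Real.norm_eq_abs, hp.le]

noncomputable def pNormSeminorm (d : ℕ) {p : ℝ} (hp : 1 ≤ p) : Seminorm ℝ (Fin d → ℝ) :=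
  haveI : Fact (1 ≤ ENNReal.ofReal p) := ⟨by simpa using hp⟩
  (normSeminorm ℝ (PiLp (ENNReal.ofReal p) fun _ : Fin d ↦ ℝ)).comp
    (WithLp.linearEquiv (ENNReal.ofReal p) ℝ (Fin d → ℝ)).symm.toLinearMap

theorem coe_pNormSeminorm {d : ℕ} {p : ℝ} (hp : 1 ≤ p) : ⇑(pNormSeminorm d hp) = pNorm p := by
  funext v
  rw [pNorm_eq_norm_toLp (by linarith)]
  rfl

theorem pNorm_eq_zero_iff {d : ℕ} {p : ℝ} (hp : 1 ≤ p) {v : Fin d → ℝ} : pNorm p v = 0 ↔ v = 0 := by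
  have : Fact (1 ≤ ENNReal.ofReal p) := ⟨by simpa using hp⟩
  rw [pNorm_eq_norm_toLp (by linarith), norm_eq_zero, WithLp.toLp_eq_zero]

theorem le_mul_pDist {d : ℕ} {p a k : ℝ} {y : Fin d → ℝ} {S : Set (Fin d → ℝ)} (hS : S.Nonempty)
    (hk : 0 ≤ k) (h : ∀ w ∈ S, a ≤ k * pNorm p (y - w)) : a ≤ k * pDist p y S := by
  obtain ⟨w, hw⟩ := hS
  rcases hk.eq_or_lt with rfl | hk
  · simpa using h w hw
  rw [← div_le_iff₀' hk]
  refine le_csInf ⟨_, w, hw, rfl⟩ ?_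
  rintro _ ⟨w', hw', rfl⟩
  exact (div_le_iff₀' hk).2 (h w' hw')

theorem global_error_inequality_pnorm_general
    {d : ℕ} (p : ℝ) (hp1 : 1 < p)
    (F : (Fin d → ℝ) → ℝ)
    (hF : ConvexOn ℝ Set.univ F)
    (Ωstar : Set (Fin d → ℝ)) (Fstar : ℝ)
    (hΩne : Ωstar.Nonempty)
    (hFstar : ∀ z ∈ Ωstar, F z = Fstar)
    (ε : ℝ) (hε : 0 < ε)
    (x xdag : Fin d → ℝ)
    (hmem : xdag ∈ {z | F z ≤ Fstar + ε})
    (hproj : ∀ z ∈ {z : Fin d → ℝ | F z ≤ Fstar + ε},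
      pNorm p (xdag - x) ≤ pNorm p (z - x)) :
    pNorm p (x - xdag) ≤ (pDist p xdag Ωstar / ε) * (F x - F xdag) := by
  set N := pNormSeminorm d hp1.le
  have hN : ⇑N = pNorm p := coe_pNormSeminorm hp1.le
  rw [← hN] at hproj
  have hFxdag : F xdag ≤ Fstar + ε := hmem
  by_cases hx : F x ≤ Fstar + ε
  · have hxdag : N (xdag - x) = 0 :=
      le_antisymm (by simpa using hproj x hx) (apply_nonneg N _)
    rw [hN, pNorm_eq_zero_iff hp1.le, sub_eq_zero] at hxdag
    subst hxdag
    simp [← hN]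
  rw [div_mul_comm]
  refine le_mul_pDist hΩne (div_nonneg (by linarith) hε.le) fun w hw ↦ ?_
  have key := hF.mul_seminorm_sub_le_of_isMinOn N (w := w) (r := Fstar + ε)
    (by linarith [hFstar w hw]) (not_le.1 hx) (isMinOn_iff.2 hproj)
  rw [hFstar w hw, add_sub_cancel_left] at key
  rw [div_mul_eq_mul_div, le_div_iff₀ hε, ← hN, map_sub_rev N x]
  calc N (xdag - x) * ε = ε * N (xdag - x) := mul_comm _ _
    _ ≤ (F x - (Fstar + ε)) * N (xdag - w) := key
    _ ≤ (F x - F xdag) * N (xdag - w) := by gcongr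

/-- Global error inequality in the `p`-norm, `p ∈ (1,2]`. For convex `F`
with nonempty convex compact minimizer set `Ω*` and minimum `Fstar`, `ε > 0`, if `xdag`
minimizes `‖z - x‖_p` over the `ε`-sublevel set, then
`‖x - xdag‖_p ≤ (dist_p(xdag, Ω*)/ε) * (F x - F xdag)`. -/
theorem global_error_inequality_pnorm
    {d : ℕ} (p : ℝ) (hp1 : 1 < p) (hp2 : p ≤ 2)
    (F : (Fin d → ℝ) → ℝ)
    (hF : ConvexOn ℝ Set.univ F)
    (Ωstar : Set (Fin d → ℝ)) (Fstar : ℝ)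
    (hΩ : Ωstar = {z | ∀ y, F z ≤ F y})
    (hΩne : Ωstar.Nonempty) (hΩconv : Convex ℝ Ωstar) (hΩcpt : IsCompact Ωstar)
    (hFstar : ∀ z ∈ Ωstar, F z = Fstar)
    (ε : ℝ) (hε : 0 < ε)
    (x xdag : Fin d → ℝ)
    (hmem : xdag ∈ {z | F z ≤ Fstar + ε})
    (hproj : ∀ z ∈ {z : Fin d → ℝ | F z ≤ Fstar + ε},
      pNorm p (xdag - x) ≤ pNorm p (z - x)) :
    pNorm p (x - xdag) ≤ (pDist p xdag Ωstar / ε) * (F x - F xdag) :=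
  global_error_inequality_pnorm_general p hp1 F hF Ωstar Fstar hΩne hFstar ε hε x xdag hmem hproj
end

section
/- Smoothness of the Nesterov smoothed function: let Ω₂ ⊆ ℝ^m be compact convex, φ convex on Ω₂, ω₊ 1-strongly convex on Ω₂ with respect to a norm ‖·‖₊, A ∈ ℝ^{m×d}, and μ > 0. Define f_μ(x) = max_{u ∈ Ω₂} ⟨Ax, u⟩ − φ(u) − μ ω₊(u), with unique maximizer u_μ(x). Then f_μ is differentiable with ∇f_μ(x) = Aᵀ u_μ(x), and ∇f_μ is Lipschitz continuous with constant ‖A‖²/μ, where ‖A‖ = max_{‖x‖ ≤ 1} max_{‖u‖₊ ≤ 1} ⟨Ax, u⟩. -/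
open scoped RealInnerProductSpace

set_option maxHeartbeats 1000000

/-- Smoothness of the Nesterov smoothed function. With `Ω₂ ⊆ ℝ^m` compact
convex, `φ` convex on `Ω₂`, `N` a norm on `ℝ^m`, `ω₊` 1-strongly convex w.r.t. `N` on `Ω₂`,
`μ > 0`, and `fμ x = max_{u ∈ Ω₂} ⟨Ax, u⟩ - φ u - μ ω₊ u` attained at the unique maximizer
`uμ x`, the function `fμ` is differentiable with gradient `Aᵀ (uμ x)` and the gradient map
is Lipschitz with constant `‖A‖²/μ`, where `‖A‖ = max_{‖x‖ ≤ 1, N u ≤ 1} ⟨Ax, u⟩`. -/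
theorem smoothed_function_gradient_lipschitz
    {d m : ℕ}
    (Ω₂ : Set (EuclideanSpace ℝ (Fin m)))
    (hcpt : IsCompact Ω₂) (hconv : Convex ℝ Ω₂) (hne : Ω₂.Nonempty)
    (φ ωp : EuclideanSpace ℝ (Fin m) → ℝ)
    (hφ : ConvexOn ℝ Ω₂ φ)
    (N : EuclideanSpace ℝ (Fin m) → ℝ)
    (hN0 : ∀ u, 0 ≤ N u) (hNdef : ∀ u, N u = 0 → u = 0)
    (hNsmul : ∀ (c : ℝ) u, N (c • u) = |c| * N u)
    (hNadd : ∀ u v, N (u + v) ≤ N u + N v)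
    (hωsc : ∀ u ∈ Ω₂, ∀ v ∈ Ω₂, ∀ t : ℝ, 0 ≤ t → t ≤ 1 →
      ωp (t • u + (1 - t) • v) ≤
        t * ωp u + (1 - t) * ωp v - (1 / 2) * t * (1 - t) * (N (u - v)) ^ 2)
    (A : EuclideanSpace ℝ (Fin d) →L[ℝ] EuclideanSpace ℝ (Fin m))
    (μ : ℝ) (hμ : 0 < μ)
    (fμ : EuclideanSpace ℝ (Fin d) → ℝ)
    (uμ : EuclideanSpace ℝ (Fin d) → EuclideanSpace ℝ (Fin m))
    (huμ : ∀ x, uμ x ∈ Ω₂ ∧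
      IsGreatest {v | ∃ u ∈ Ω₂, v = ⟪A x, u⟫ - φ u - μ * ωp u} (fμ x) ∧
      fμ x = ⟪A x, uμ x⟫ - φ (uμ x) - μ * ωp (uμ x) ∧
      (∀ u ∈ Ω₂, fμ x = ⟪A x, u⟫ - φ u - μ * ωp u → u = uμ x))
    (opA : ℝ)
    (hopA : IsLUB {v | ∃ x u, ‖x‖ ≤ 1 ∧ N u ≤ 1 ∧ v = ⟪A x, u⟫} opA) :
    (∀ x, HasGradientAt fμ ((ContinuousLinearMap.adjoint A) (uμ x)) x) ∧
    LipschitzWith (Real.toNNReal (opA ^ 2 / μ))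
      (fun x => (ContinuousLinearMap.adjoint A) (uμ x)) := by
  classical
  set B := ContinuousLinearMap.adjoint A with hB
  -- N 0 = 0
  have hN00 : N (0 : EuclideanSpace ℝ (Fin m)) = 0 := by
    have := hNsmul 0 0
    simpa using this
  -- opA ≥ 0
  have hopA0 : (0 : ℝ) ≤ opA := by
    refine hopA.1 ⟨0, 0, by simp, by simp [hN00], by simp⟩
  -- inner product bound
  have hinner : ∀ z w, ⟪A z, w⟫ ≤ opA * (‖z‖ * N w) := by
    intro z w
    rcases eq_or_ne z 0 with rfl | hz
    · simp
    rcases eq_or_lt_of_le (hN0 w) with hw | hw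
    · have hw0 : w = 0 := hNdef w hw.symm
      subst hw0
      simp [hN00]
    · have hz' : (0 : ℝ) < ‖z‖ := norm_pos_iff.mpr hz
      have hx1 : ‖(‖z‖⁻¹ • z : EuclideanSpace ℝ (Fin d))‖ ≤ 1 := by
        rw [norm_smul, norm_inv, norm_norm]
        rw [inv_mul_cancel₀ hz'.ne']
      have hu1 : N ((N w)⁻¹ • w) ≤ 1 := by
        rw [hNsmul, abs_of_nonneg (by positivity)]
        rw [inv_mul_cancel₀ hw.ne']
      have hmem : ⟪A (‖z‖⁻¹ • z), (N w)⁻¹ • w⟫ ≤ opA :=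
        hopA.1 ⟨_, _, hx1, hu1, rfl⟩
      rw [map_smul, real_inner_smul_left, real_inner_smul_right] at hmem
      have h2 := mul_le_mul_of_nonneg_left hmem (by positivity : (0:ℝ) ≤ ‖z‖ * N w)
      calc ⟪A z, w⟫ = (‖z‖ * N w) * (‖z‖⁻¹ * ((N w)⁻¹ * ⟪A z, w⟫)) := by
            field_simp
        _ ≤ (‖z‖ * N w) * opA := h2
        _ = opA * (‖z‖ * N w) := by ring
  -- adjoint bound
  have hadj : ∀ w, ‖B w‖ ≤ opA * N w := by
    intro w
    have h1 : ‖B w‖ ^ 2 = ⟪A (B w), w⟫ := by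
      rw [← real_inner_self_eq_norm_sq]
      rw [hB, ContinuousLinearMap.adjoint_inner_left, real_inner_comm]
    have h2 : ‖B w‖ ^ 2 ≤ opA * (‖B w‖ * N w) := h1 ▸ hinner (B w) w
    rcases eq_or_lt_of_le (norm_nonneg (B w)) with h0 | h0
    · rw [← h0]
      exact mul_nonneg hopA0 (hN0 w)
    · nlinarith [h2, h0]
  -- unfolded description of the optimization
  have hopt : ∀ x, ∀ v ∈ Ω₂,
      (⟪A x, v⟫ - φ v - μ * ωp v) + μ / 2 * (N (uμ x - v)) ^ 2 ≤
      ⟪A x, uμ x⟫ - φ (uμ x) - μ * ωp (uμ x) := by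
    intro x v hv
    obtain ⟨hu, hgr, hfx, -⟩ := huμ x
    by_contra hcon
    push_neg at hcon
    set u := uμ x with hudef
    set c := μ / 2 * (N (u - v)) ^ 2 with hc
    have hc0 : (0 : ℝ) ≤ c := by positivity
    set gv := ⟪A x, v⟫ - φ v - μ * ωp v with hgv
    set gu := ⟪A x, u⟫ - φ u - μ * ωp u with hgu
    set a := gv + c - gu with ha
    have ha0 : (0 : ℝ) < a := by simp only [ha]; linarith
    set t := min 1 (a / (2 * c + 1)) with ht
    have ht0 : (0 : ℝ) < t := lt_min one_pos (by positivity)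
    have ht1 : t ≤ 1 := min_le_left _ _
    have hmem : t • v + (1 - t) • u ∈ Ω₂ :=
      hconv hv hu ht0.le (by linarith) (by ring)
    have hupper : ⟪A x, t • v + (1 - t) • u⟫ - φ (t • v + (1 - t) • u)
        - μ * ωp (t • v + (1 - t) • u) ≤ gu := by
      rw [← hfx]
      exact hgr.2 ⟨_, hmem, rfl⟩
    have hφ' : φ (t • v + (1 - t) • u) ≤ t * φ v + (1 - t) * φ u :=
      hφ.2 hv hu ht0.le (by linarith) (by ring)
    have hω' := hωsc v hv u hu t ht0.le ht1
    have hlin : ⟪A x, t • v + (1 - t) • u⟫ = t * ⟪A x, v⟫ + (1 - t) * ⟪A x, u⟫ := by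
      rw [inner_add_right, real_inner_smul_right, real_inner_smul_right]
    have hNsym : N (v - u) = N (u - v) := by
      have := hNsmul (-1) (u - v)
      simpa [neg_sub] using this
    rw [hNsym] at hω'
    have hωμ := mul_le_mul_of_nonneg_left hω' hμ.le
    rw [hlin] at hupper
    -- combine to get t * a ≤ t * t * c
    have hkey : t * a ≤ t * t * c := by
      simp only [ha, hgv, hgu, hc]
      linarith [hupper, hφ', hωμ]
    have hta : a ≤ t * c := by nlinarith [hkey, ht0, ht1, hc0]
    have htle : t * (2 * c + 1) ≤ a := by
      have h := min_le_right 1 (a / (2 * c + 1))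
      have : t * (2 * c + 1) ≤ (a / (2 * c + 1)) * (2 * c + 1) :=
        mul_le_mul_of_nonneg_right h (by positivity)
      rwa [div_mul_cancel₀ _ (by positivity : (2 * c + 1 : ℝ) ≠ 0)] at this
    nlinarith [mul_nonneg ht0.le hc0]
  -- Lipschitz estimate for the gradient map
  have hlip : ∀ x y, ‖B (uμ x) - B (uμ y)‖ ≤ opA ^ 2 / μ * ‖x - y‖ := by
    intro x y
    obtain ⟨hux, -, -, -⟩ := huμ x
    obtain ⟨huy, -, -, -⟩ := huμ y
    have h1 := hopt x (uμ y) huy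
    have h2 := hopt y (uμ x) hux
    set u := uμ x with hu
    set v := uμ y with hv
    have hNsym : N (v - u) = N (u - v) := by
      have := hNsmul (-1) (u - v)
      simpa [neg_sub] using this
    rw [hNsym] at h2
    have hsum : μ * (N (u - v)) ^ 2 ≤ ⟪A (x - y), u - v⟫ := by
      rw [map_sub, inner_sub_left, inner_sub_right, inner_sub_right]
      linarith
    have hib : ⟪A (x - y), u - v⟫ ≤ opA * (‖x - y‖ * N (u - v)) := hinner _ _
    rw [← map_sub]
    rcases eq_or_lt_of_le (hN0 (u - v)) with hNz | hNz
    · have : u - v = 0 := hNdef _ hNz.symm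
      rw [this]
      simp only [map_zero, norm_zero]
      positivity
    · have hNle : N (u - v) ≤ opA * ‖x - y‖ / μ := by
        rw [le_div_iff₀ hμ]
        nlinarith [hsum, hib, hNz]
      calc ‖B (u - v)‖ ≤ opA * N (u - v) := hadj _
        _ ≤ opA * (opA * ‖x - y‖ / μ) := mul_le_mul_of_nonneg_left hNle hopA0
        _ = opA ^ 2 / μ * ‖x - y‖ := by ring
  constructor
  · -- gradient
    intro x
    rw [hasGradientAt_iff_isLittleO]
    have hb : ∀ y, |fμ y - fμ x - ⟪B (uμ x), y - x⟫| ≤ opA ^ 2 / μ * ‖y - x‖ ^ 2 := by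
      intro y
      obtain ⟨hux, hgx, hfx, -⟩ := huμ x
      obtain ⟨huy, hgy, hfy, -⟩ := huμ y
      have hBinner : ∀ (w : EuclideanSpace ℝ (Fin m)),
          ⟪B w, y - x⟫ = ⟪A y, w⟫ - ⟪A x, w⟫ := by
        intro w
        rw [hB, ContinuousLinearMap.adjoint_inner_left, map_sub, inner_sub_right,
          real_inner_comm w (A y), real_inner_comm w (A x)]
      have hlow : fμ x + ⟪B (uμ x), y - x⟫ ≤ fμ y := by
        have h1 : ⟪A y, uμ x⟫ - φ (uμ x) - μ * ωp (uμ x) ≤ fμ y :=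
          hgy.2 ⟨uμ x, hux, rfl⟩
        rw [hBinner, hfx]
        linarith
      have hup : fμ y - fμ x ≤ ⟪B (uμ y), y - x⟫ := by
        have h1 : ⟪A x, uμ y⟫ - φ (uμ y) - μ * ωp (uμ y) ≤ fμ x :=
          hgx.2 ⟨uμ y, huy, rfl⟩
        rw [hBinner, hfy]
        linarith
      have hdiff : fμ y - fμ x - ⟪B (uμ x), y - x⟫ ≤ ⟪B (uμ y) - B (uμ x), y - x⟫ := by
        rw [inner_sub_left]
        linarith
      have hcs : ⟪B (uμ y) - B (uμ x), y - x⟫ ≤ ‖B (uμ y) - B (uμ x)‖ * ‖y - x‖ :=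
        real_inner_le_norm _ _
      have hl := hlip y x
      have hfin : fμ y - fμ x - ⟪B (uμ x), y - x⟫ ≤ opA ^ 2 / μ * ‖y - x‖ ^ 2 := by
        have h1 : ‖B (uμ y) - B (uμ x)‖ * ‖y - x‖ ≤ opA ^ 2 / μ * ‖y - x‖ * ‖y - x‖ :=
          mul_le_mul_of_nonneg_right hl (norm_nonneg _)
        nlinarith [hdiff, hcs]
      have hrhs0 : (0 : ℝ) ≤ opA ^ 2 / μ * ‖y - x‖ ^ 2 := by positivity
      rw [abs_le]
      constructor
      · linarith
      · exact hfin
    have hO : (fun y => fμ y - fμ x - ⟪B (uμ x), y - x⟫) =O[nhds x]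
        fun y => ‖y - x‖ ^ 2 := by
      rw [Asymptotics.isBigO_iff]
      refine ⟨opA ^ 2 / μ, Filter.Eventually.of_forall fun y => ?_⟩
      rw [Real.norm_eq_abs, Real.norm_eq_abs, abs_of_nonneg (by positivity : (0:ℝ) ≤ ‖y - x‖ ^ 2)]
      exact hb y
    have ho : (fun y : EuclideanSpace ℝ (Fin d) => ‖y - x‖ ^ 2) =o[nhds x]
        fun y => y - x := by
      rw [Asymptotics.isLittleO_iff]
      intro c hc
      filter_upwards [Metric.ball_mem_nhds x hc] with y hy
      rw [Metric.mem_ball, dist_eq_norm] at hy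
      rw [Real.norm_eq_abs, abs_of_nonneg (by positivity : (0:ℝ) ≤ ‖y - x‖ ^ 2)]
      nlinarith [norm_nonneg (y - x), hy]
    exact hO.trans_isLittleO ho
  · -- Lipschitz
    refine LipschitzWith.of_dist_le_mul fun x y => ?_
    rw [dist_eq_norm, dist_eq_norm]
    calc ‖B (uμ x) - B (uμ y)‖ ≤ opA ^ 2 / μ * ‖x - y‖ := hlip x y
      _ = (Real.toNNReal (opA ^ 2 / μ) : ℝ) * ‖x - y‖ := by
          rw [Real.coe_toNNReal _ (by positivity)]
end

section
/- KL property implies local error bound: let F : ℝ^d → ℝ be proper, convex, lower semicontinuous with nonempty argmin Ω_* and minimum F_*. Suppose for constants c > 0, β ∈ [0,1), η > 0, and a set U containing a point x_* ∈ Ω_*, for every x ∈ U with F_* < F(x) < F_* + η, every subgradient g ∈ ∂F(x) satisfies ‖g‖ ≥ (1/(c(1−β))) (F(x) − F_*)^β. Then for all x ∈ U with F_* < F(x) < F_* + η (assuming the segment/relevant paths stay in U), dist(x, Ω_*) ≤ c (F(x) − F_*)^{1−β}. -/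
/-!
If `p` lies above the level `r > F*`, its projection `w` onto the sublevel set `{F ≤ r}` lies on
the level `r`, and separating `{F < r}` from the half-space beyond `w` produces a subgradient `g`
at `w` parallel to `p - w` with `‖g‖ * ‖p - w‖ ≤ F p - r`. The KL inequality at `w` then bounds
the step `‖p - w‖`. Descending through the levels `F* + s * q ^ k` (`s = F x - F*`, `0 < q < 1`)
gives steps bounded by a geometric sequence of ratio `q ^ (1 - β)`, hence a Cauchy sequence whose
limit is a minimiser within `c * s ^ (1 - β) * q ^ (-β)` of `x` (Bernoulli's inequality);
letting `q → 1` gives the error bound.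
-/

open Set Filter Topology
open scoped RealInnerProductSpace

lemma exists_seq_of_forall_exists_succ {α : Type*} {P : ℕ → α → Prop} {R : ℕ → α → α → Prop}
    {x : α} (hx : P 0 x) (h : ∀ k a, P k a → ∃ b, P (k + 1) b ∧ R k a b) :
    ∃ u : ℕ → α, u 0 = x ∧ ∀ k, P k (u k) ∧ R k (u k) (u (k + 1)) := by
  have h' : ∀ k a, ∃ b, P k a → P (k + 1) b ∧ R k a b := fun k a ↦
    (em (P k a)).elim (fun ha ↦ (h k a ha).imp fun _ hb _ ↦ hb) fun ha ↦ ⟨a, fun h ↦ absurd h ha⟩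
  choose next hnext using h'
  let u : ℕ → α := fun n ↦ Nat.rec x next n
  have hu : ∀ k, P k (u k) := fun k ↦ Nat.rec hx (fun k ih ↦ (hnext k _ ih).1) k
  exact ⟨u, rfl, fun k ↦ ⟨hu k, (hnext k _ (hu k)).2⟩⟩

lemma Real.mul_pow_div_rpow_mul_pow_succ {s q : ℝ} (hs : 0 < s) (hq : 0 < q) (β : ℝ) (k : ℕ) :
    s * q ^ k / (s * q ^ (k + 1)) ^ β = s ^ (1 - β) * q ^ (-β) * (q ^ (1 - β)) ^ k := by
  rw [Real.mul_rpow hs.le (by positivity), ← Real.rpow_natCast, ← Real.rpow_natCast,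
    ← Real.rpow_natCast, ← Real.rpow_mul hq.le, ← Real.rpow_mul hq.le, Real.rpow_sub hs,
    Real.rpow_one, Real.rpow_neg hq.le]
  have e₁ : q ^ ((↑(k + 1) : ℝ) * β) = q ^ ((k : ℝ) * β) * q ^ β := by
    rw [← Real.rpow_add hq]; push_cast; ring_nf
  have e₂ : q ^ ((1 - β) * k) = q ^ (k : ℝ) / q ^ ((k : ℝ) * β) := by
    rw [← Real.rpow_sub hq]; ring_nf
  rw [e₁, e₂]
  field_simp

lemma Real.mul_one_sub_le_one_sub_rpow {q p : ℝ} (hq : 0 ≤ q) (hp₀ : 0 ≤ p) (hp₁ : p ≤ 1) :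
    p * (1 - q) ≤ 1 - q ^ p := by
  have := rpow_one_add_le_one_add_mul_self (s := q - 1) (by linarith) hp₀ hp₁
  rw [add_sub_cancel] at this
  linarith

lemma Real.le_of_forall_le_mul_rpow_neg {a b β : ℝ} (h : ∀ q, 0 < q → q < 1 → a ≤ b * q ^ (-β)) :
    a ≤ b := by
  have hlim : Tendsto (fun q : ℝ ↦ b * q ^ (-β)) (𝓝[<] 1) (𝓝 b) := by
    have := (Real.continuousAt_rpow_const 1 (-β) (Or.inl one_ne_zero)).tendsto.const_mul b
    simpa using this.mono_left nhdsWithin_le_nhds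
  refine ge_of_tendsto hlim ?_
  filter_upwards [Ioo_mem_nhdsLT zero_lt_one] with q hq using h q hq.1 hq.2

section Subgradient

variable {E : Type*} [NormedAddCommGroup E] [InnerProductSpace ℝ E] {F : E → ℝ} {v w : E} {r : ℝ}

lemma ConvexOn.slope_le_slope_of_le_on_hyperplane (hF : ConvexOn ℝ univ F)
    (hr : ∀ z, ⟪v, z - w⟫ = 0 → r ≤ F z) {y₁ y₂ : E} (h₁ : ⟪v, y₁ - w⟫ < 0)
    (h₂ : 0 < ⟪v, y₂ - w⟫) :
    (r - F y₁) / -⟪v, y₁ - w⟫ ≤ (F y₂ - r) / ⟪v, y₂ - w⟫ := by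
  set a := ⟪v, y₁ - w⟫
  set b := ⟪v, y₂ - w⟫
  have hba : 0 < b - a := by linarith
  have hθ : b / (b - a) + -a / (b - a) = 1 := by field_simp; ring
  -- the point `z` is where the segment `[y₁, y₂]` crosses the hyperplane
  set z := (b / (b - a)) • y₁ + (-a / (b - a)) • y₂
  have hz : ⟪v, z - w⟫ = 0 := by
    have ha : a = ⟪v, y₁⟫ - ⟪v, w⟫ := inner_sub_right _ _ _
    have hb : b = ⟪v, y₂⟫ - ⟪v, w⟫ := inner_sub_right _ _ _
    rw [inner_sub_right, inner_add_right, real_inner_smul_right, real_inner_smul_right]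
    linear_combination -(b / (b - a)) * ha + a / (b - a) * hb + ⟪v, w⟫ * hθ
  have hconv : r ≤ b / (b - a) * F y₁ + -a / (b - a) * F y₂ :=
    (hr z hz).trans (hF.2 (mem_univ _) (mem_univ _) (div_pos h₂ hba).le
      (div_nonneg (neg_nonneg.2 h₁.le) hba.le) hθ)
  rw [div_le_div_iff₀ (neg_pos.2 h₁) h₂]
  rw [div_mul_eq_mul_div, div_mul_eq_mul_div, ← add_div, le_div_iff₀ hba] at hconv
  linarith

lemma ConvexOn.exists_nonneg_minorant_of_le_on_halfspace (hF : ConvexOn ℝ univ F) (hv : v ≠ 0)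
    (hr : ∀ z, 0 ≤ ⟪v, z - w⟫ → r ≤ F z) : ∃ μ : ℝ, 0 ≤ μ ∧ ∀ y, r + μ * ⟪v, y - w⟫ ≤ F y := by
  -- `μ` is the largest slope of `F` below level `r` on the negative side of the hyperplane
  set A := insert 0 ((fun y ↦ (r - F y) / -⟪v, y - w⟫) '' {y | ⟪v, y - w⟫ < 0})
  have hvv : 0 < ⟪v, w + v - w⟫ := by
    rw [add_sub_cancel_left, real_inner_self_eq_norm_sq]
    exact pow_pos (norm_pos_iff.2 hv) 2
  have hA : ∀ y, 0 < ⟪v, y - w⟫ → ∀ t ∈ A, t ≤ (F y - r) / ⟪v, y - w⟫ := by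
    intro y hy
    simp only [A, forall_mem_insert, forall_mem_image]
    exact ⟨div_nonneg (sub_nonneg.2 (hr y hy.le)) hy.le, fun _ h₁ ↦
      hF.slope_le_slope_of_le_on_hyperplane (fun z hz ↦ hr z hz.ge) h₁ hy⟩
  have hbdd : BddAbove A := ⟨_, hA _ hvv⟩
  refine ⟨sSup A, le_csSup hbdd (mem_insert _ _), fun y ↦ ?_⟩
  rcases lt_trichotomy ⟪v, y - w⟫ 0 with hy | hy | hy
  · have := le_csSup hbdd (mem_insert_of_mem _ (mem_image_of_mem _ hy))
    rw [div_le_iff₀ (neg_pos.2 hy)] at this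
    linarith
  · simpa [hy] using hr y hy.ge
  · have : sSup A ≤ _ := csSup_le (insert_nonempty _ _) (hA y hy)
    rw [le_div_iff₀ hy] at this
    linarith

-- Continuity lets `z` be pushed slightly further along `v` while staying in `{F < r}`.
lemma Continuous.le_of_inner_nonneg_of_sublevel_inner_nonpos (hcont : Continuous F) (hv : v ≠ 0)
    (hS : ∀ y, F y ≤ r → ⟪v, y - w⟫ ≤ 0) {z : E} (hz : 0 ≤ ⟪v, z - w⟫) : r ≤ F z := by
  by_contra! hlt
  have hnear : ∀ᶠ ε in 𝓝[>] (0 : ℝ), F (z + ε • v) < r := by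
    have hc : Continuous fun ε : ℝ ↦ F (z + ε • v) := by fun_prop
    exact nhdsWithin_le_nhds ((hc.tendsto' 0 (F z) (by simp)).eventually (gt_mem_nhds hlt))
  obtain ⟨ε, hε, hεpos⟩ := (hnear.and self_mem_nhdsWithin).exists
  have hvv : 0 < ⟪v, v⟫ := real_inner_self_pos.2 hv
  have := hS _ hε.le
  rw [add_sub_right_comm, inner_add_right, real_inner_smul_right] at this
  nlinarith

lemma ConvexOn.exists_subgradient_mul_dist_le [CompleteSpace E] (hF : ConvexOn ℝ univ F)
    (hcont : Continuous F) (hS : ∃ x₀, F x₀ ≤ r) {p : E} (hp : r < F p) :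
    ∃ w g, F w = r ∧ (∀ y, F y ≥ F w + ⟪g, y - w⟫) ∧ ‖g‖ * dist p w ≤ F p - r := by
  set S := {y | F y ≤ r}
  have hSconv : Convex ℝ S := by simpa [sep_univ] using hF.convex_le r
  have hScompl : IsComplete S := (isClosed_le hcont continuous_const).isComplete
  obtain ⟨w, hwS, hw⟩ := exists_norm_eq_iInf_of_complete_convex hS hScompl hSconv p
  have hproj := (norm_eq_iInf_iff_real_inner_le_zero hSconv hwS).1 hw
  have hv : p - w ≠ 0 := sub_ne_zero.2 fun h ↦ hp.not_ge (h ▸ hwS)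
  have hhalf := fun z ↦ hcont.le_of_inner_nonneg_of_sublevel_inner_nonpos (z := z) hv hproj
  have hFw : F w = r := le_antisymm hwS (hhalf w (by simp))
  obtain ⟨μ, hμ, hminor⟩ := hF.exists_nonneg_minorant_of_le_on_halfspace hv hhalf
  refine ⟨w, μ • (p - w), hFw, fun y ↦ ?_, ?_⟩
  · rw [hFw, real_inner_smul_left]
    exact hminor y
  · rw [norm_smul, Real.norm_of_nonneg hμ, dist_eq_norm, mul_assoc,
      ← real_inner_self_eq_norm_mul_norm]
    linarith [hminor p]

lemma ConvexOn.exists_dist_le_of_le_norm_subgradient [CompleteSpace E] (hF : ConvexOn ℝ univ F)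
    (hcont : Continuous F) {Fstar c β b : ℝ} (hc : 0 < c) (hβ1 : β < 1)
    (hmin : ∃ z, F z ≤ Fstar) (hb : 0 < b) {p : E} (hbp : Fstar + b < F p)
    (hKL : ∀ w, F w = Fstar + b → ∀ g, (∀ y, F y ≥ F w + ⟪g, y - w⟫) →
      ‖g‖ ≥ 1 / (c * (1 - β)) * b ^ β) :
    ∃ w, F w = Fstar + b ∧ dist p w ≤ c * (1 - β) * (F p - (Fstar + b)) / b ^ β := by
  obtain ⟨w, g, hw, hg, hgw⟩ :=
    hF.exists_subgradient_mul_dist_le hcont (hmin.imp fun z hz ↦ by linarith) hbp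
  refine ⟨w, hw, ?_⟩
  have h1β : 0 < 1 - β := by linarith
  have hm := hKL w hw g hg
  rw [le_div_iff₀ (by positivity)]
  calc dist p w * b ^ β = c * (1 - β) * (1 / (c * (1 - β)) * b ^ β * dist p w) := by field_simp
    _ ≤ c * (1 - β) * (‖g‖ * dist p w) := by gcongr
    _ ≤ c * (1 - β) * (F p - (Fstar + b)) := by gcongr

lemma ConvexOn.exists_dist_le_of_kl [CompleteSpace E] (hF : ConvexOn ℝ univ F)
    (hcont : Continuous F) {Fstar c β q : ℝ} (hc : 0 < c) (hβ0 : 0 ≤ β) (hβ1 : β < 1)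
    (hq0 : 0 < q) (hq1 : q < 1) (hmin : ∃ z, F z ≤ Fstar) {x : E} (hx : Fstar < F x)
    (hKL : ∀ w, Fstar < F w → F w < F x → ∀ g, (∀ y, F y ≥ F w + ⟪g, y - w⟫) →
      ‖g‖ ≥ 1 / (c * (1 - β)) * (F w - Fstar) ^ β) :
    ∃ z, F z = Fstar ∧ dist x z ≤ c * (F x - Fstar) ^ (1 - β) * q ^ (-β) := by
  set s := F x - Fstar
  have hs : 0 < s := sub_pos.2 hx
  -- the descent visits the levels `Fstar + s * q ^ k`, with steps of length at most `C * Q ^ k`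
  set r : ℕ → ℝ := fun k ↦ Fstar + s * q ^ k
  set C := c * (1 - β) * (1 - q) * (s ^ (1 - β) * q ^ (-β))
  set Q := q ^ (1 - β)
  have hQ1 : Q < 1 := Real.rpow_lt_one hq0.le hq1 (by linarith)
  have hstep : ∀ k p, F p = r k → ∃ w, F w = r (k + 1) ∧ dist p w ≤ C * Q ^ k := by
    intro k p hp
    have hqk : q ^ (k + 1) < q ^ k := pow_lt_pow_right_of_lt_one₀ hq0 hq1 k.lt_succ_self
    have hqk1 : q ^ (k + 1) < 1 := pow_lt_one₀ hq0.le hq1 k.succ_ne_zero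
    have hlt : r (k + 1) < F p := by rw [hp]; simp only [r]; gcongr
    obtain ⟨w, hw, hpw⟩ := hF.exists_dist_le_of_le_norm_subgradient hcont hc hβ1 hmin
      (by positivity) hlt fun w hw g hg ↦ by
        have hFw₁ : Fstar < F w := by rw [hw]; exact lt_add_of_pos_right _ (by positivity)
        have hFw₂ : F w < F x := by rw [hw]; linarith [mul_lt_of_lt_one_right hs hqk1]
        simpa only [hw, add_sub_cancel_left] using hKL w hFw₁ hFw₂ g hg
    refine ⟨w, hw, hpw.trans_eq ?_⟩
    calc _ = c * (1 - β) * (1 - q) * (s * q ^ k / (s * q ^ (k + 1)) ^ β) := by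
          rw [hp]; simp only [r]; ring
      _ = C * Q ^ k := by rw [Real.mul_pow_div_rpow_mul_pow_succ hs hq0]; ring
  obtain ⟨u, rfl, hu⟩ := exists_seq_of_forall_exists_succ (x := x) (by simp [r, s]) hstep
  obtain ⟨z, hz⟩ := cauchySeq_tendsto_of_complete
    (cauchySeq_of_le_geometric Q C hQ1 fun k ↦ (hu k).2)
  have hr : Tendsto r atTop (𝓝 Fstar) := by
    simpa using (tendsto_pow_atTop_nhds_zero_of_lt_one hq0.le hq1).const_mul s |>.const_add Fstar
  refine ⟨z, tendsto_nhds_unique ((hcont.tendsto z).comp hz) (hr.congr fun k ↦ (hu k).1.symm), ?_⟩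
  calc dist (u 0) z ≤ C / (1 - Q) :=
        dist_le_of_le_geometric_of_tendsto₀ Q C hQ1 (fun k ↦ (hu k).2) hz
    _ ≤ c * s ^ (1 - β) * q ^ (-β) := by
      rw [div_le_iff₀ (by linarith)]
      calc C = c * s ^ (1 - β) * q ^ (-β) * ((1 - β) * (1 - q)) := by ring
        _ ≤ _ := by
          gcongr
          exact Real.mul_one_sub_le_one_sub_rpow hq0.le (by linarith) (by linarith)

end Subgradient

theorem kl_implies_local_error_bound_general
    {d : ℕ} (F : EuclideanSpace ℝ (Fin d) → ℝ)
    (hF : ConvexOn ℝ Set.univ F)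
    (Ωstar : Set (EuclideanSpace ℝ (Fin d))) (Fstar : ℝ)
    (hΩ : Ωstar = {z | ∀ y, F z ≤ F y})
    (hFstar : ∀ z ∈ Ωstar, F z = Fstar)
    (c β η : ℝ) (hc : 0 < c) (hβ0 : 0 ≤ β) (hβ1 : β < 1)
    (U : Set (EuclideanSpace ℝ (Fin d)))
    (xstar : EuclideanSpace ℝ (Fin d)) (hxstarΩ : xstar ∈ Ωstar)
    (hUsub : {x | F x < Fstar + η} ⊆ U)
    (hKL : ∀ x ∈ U, Fstar < F x → F x < Fstar + η →
      ∀ g : EuclideanSpace ℝ (Fin d), (∀ y, F y ≥ F x + ⟪g, y - x⟫) →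
        ‖g‖ ≥ (1 / (c * (1 - β))) * (F x - Fstar) ^ β) :
    ∀ x ∈ U, Fstar < F x → F x < Fstar + η →
      Metric.infDist x Ωstar ≤ c * (F x - Fstar) ^ (1 - β) := by
  subst hΩ
  have hcont : Continuous F := continuousOn_univ.1 (hF.continuousOn isOpen_univ)
  have hxstar : F xstar = Fstar := hFstar xstar hxstarΩ
  intro x _ hx₁ hx₂
  refine Real.le_of_forall_le_mul_rpow_neg (β := β) fun q hq₀ hq₁ ↦ ?_
  obtain ⟨z, hz, hxz⟩ := hF.exists_dist_le_of_kl hcont hc hβ0 hβ1 hq₀ hq₁ ⟨xstar, hxstar.le⟩ hx₁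
    fun w hw₁ hw₂ ↦ hKL w (hUsub (hw₂.trans hx₂)) hw₁ (hw₂.trans hx₂)
  have hzΩ : z ∈ {z | ∀ y, F z ≤ F y} := fun y ↦ (hz.trans hxstar.symm).le.trans (hxstarΩ y)
  exact (Metric.infDist_le_dist_of_mem hzΩ).trans hxz

/-- KL property implies a local error bound. Let `F : ℝ^d → ℝ` be convex
(hence proper and continuous, so lower semicontinuous) with nonempty argmin set `Ω*` and
minimum `Fstar`. If for `c > 0`, `β ∈ [0,1)`, `η > 0` and a set `U` containing some
`xstar ∈ Ω*` that also contains the relevant sublevel region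
(`{x | F x < Fstar + η} ⊆ U`), every subgradient `g ∈ ∂F x` at any `x ∈ U` with
`Fstar < F x < Fstar + η` satisfies `‖g‖ ≥ (1/(c(1-β))) (F x - Fstar)^β`, then every such
`x` satisfies `dist(x, Ω*) ≤ c (F x - Fstar)^(1-β)`. -/
theorem kl_implies_local_error_bound
    {d : ℕ} (F : EuclideanSpace ℝ (Fin d) → ℝ)
    (hF : ConvexOn ℝ Set.univ F)
    (Ωstar : Set (EuclideanSpace ℝ (Fin d))) (Fstar : ℝ)
    (hΩ : Ωstar = {z | ∀ y, F z ≤ F y})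
    (hΩne : Ωstar.Nonempty)
    (hFstar : ∀ z ∈ Ωstar, F z = Fstar)
    (c β η : ℝ) (hc : 0 < c) (hβ0 : 0 ≤ β) (hβ1 : β < 1) (hη : 0 < η)
    (U : Set (EuclideanSpace ℝ (Fin d)))
    (xstar : EuclideanSpace ℝ (Fin d)) (hxstarΩ : xstar ∈ Ωstar) (hxstarU : xstar ∈ U)
    (hUsub : {x | F x < Fstar + η} ⊆ U)
    (hKL : ∀ x ∈ U, Fstar < F x → F x < Fstar + η →
      ∀ g : EuclideanSpace ℝ (Fin d), (∀ y, F y ≥ F x + ⟪g, y - x⟫) →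
        ‖g‖ ≥ (1 / (c * (1 - β))) * (F x - Fstar) ^ β) :
    ∀ x ∈ U, Fstar < F x → F x < Fstar + η →
      Metric.infDist x Ωstar ≤ c * (F x - Fstar) ^ (1 - β) :=
  kl_implies_local_error_bound_general F hF Ωstar Fstar hΩ hFstar c β η hc hβ0 hβ1 U xstar hxstarΩ
    hUsub hKL
end

section
/- Distance to a closed convex cone's dual as a max: let K ⊆ ℝ^m be a closed convex cone with dual cone K* = {v : ⟨v, u⟩ ≥ 0 ∀u ∈ K}. Then for any w ∈ ℝ^m, dist(w, K*) = max_{‖u‖ ≤ 1, u ∈ −K} ⟨w, u⟩. -/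
/-!
Let `z` be the nearest point to `w` in the closed convex cone `K*`, and `q = w - z`. The
variational inequality of the projection, tested on `x + z` and `0`, gives `⟪q, x⟫ ≤ 0` on `K*`
and `⟪q, z⟫ = 0` (Moreau decomposition), so `-q ∈ K** = K` by the bipolar theorem. For
`u ∈ -K` with `‖u‖ ≤ 1`, `⟪w, u⟫ = ⟪q, u⟫ + ⟪z, u⟫ ≤ ‖q‖` since `⟪z, u⟫ ≤ 0`, and `u = q / ‖q‖`
attains `⟪w, u⟫ = ‖q‖ = dist(w, K*)`.
-/

open scoped RealInnerProductSpace

lemma exists_properCone_coe_eq {E : Type*} [AddCommGroup E] [Module ℝ E] [TopologicalSpace E]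
    {K : Set E} (hclosed : IsClosed K) (hconv : Convex ℝ K)
    (hcone : ∀ u ∈ K, ∀ c : ℝ, 0 ≤ c → c • u ∈ K) (hne : K.Nonempty) :
    ∃ C : ProperCone ℝ E, (C : Set E) = K := by
  obtain ⟨k, hk⟩ := hne
  have add_mem {x y : E} (hx : x ∈ K) (hy : y ∈ K) : x + y ∈ K := by
    have h := hcone _ (hconv hx hy one_half_pos.le one_half_pos.le (add_halves 1)) 2 zero_le_two
    rwa [smul_add, smul_smul, smul_smul, mul_one_div_cancel two_ne_zero, one_smul, one_smul] at h
  exact ⟨{ carrier := K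
           add_mem' := add_mem
           zero_mem' := by simpa using hcone k hk 0 le_rfl
           smul_mem' := fun c x hx => hcone x hx c c.2
           isClosed' := hclosed }, rfl⟩

variable {E : Type*} [NormedAddCommGroup E] [InnerProductSpace ℝ E]

lemma PointedCone.inner_le_zero_of_forall_inner_sub_le_zero {C : PointedCone ℝ E} {w z : E}
    (hz : z ∈ C) (h : ∀ x ∈ C, ⟪w - z, x - z⟫ ≤ 0) :
    (∀ x ∈ C, ⟪w - z, x⟫ ≤ 0) ∧ ⟪w - z, z⟫ = 0 := by
  have hle (x : E) (hx : x ∈ C) : ⟪w - z, x⟫ ≤ 0 := by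
    simpa using h (x + z) (C.add_mem hx hz)
  have hge : 0 ≤ ⟪w - z, z⟫ := by simpa using h 0 C.zero_mem
  exact ⟨hle, (hle z hz).antisymm hge⟩

variable [CompleteSpace E]

namespace ProperCone

theorem exists_mem_innerDual_infDist_eq (K : ProperCone ℝ E) (w : E) :
    ∃ z ∈ innerDual (K : Set E), z - w ∈ K ∧ ⟪w - z, z⟫ = 0 ∧
      Metric.infDist w (innerDual (K : Set E)) = ‖w - z‖ := by
  set C := innerDual (K : Set E)
  obtain ⟨z, hzC, hz⟩ := exists_norm_eq_iInf_of_complete_convex C.nonempty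
    C.isClosed.isComplete C.convex w
  obtain ⟨hle, horth⟩ := PointedCone.inner_le_zero_of_forall_inner_sub_le_zero (C := C) hzC
    fun x hx => (norm_eq_iInf_iff_real_inner_le_zero C.convex hzC).1 hz x hx
  have hmem : z - w ∈ innerDual (C : Set E) := (mem_innerDual).2 fun x hx => by
    rw [← neg_sub, inner_neg_right, real_inner_comm]
    exact neg_nonneg.2 (hle x hx)
  rw [innerDual_innerDual] at hmem
  refine ⟨z, hzC, hmem, horth, ?_⟩
  rw [Metric.infDist_eq_iInf, hz]
  simp only [dist_eq_norm]

theorem isGreatest_inner_infDist_innerDual (K : ProperCone ℝ E) (w : E) :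
    IsGreatest {r | ∃ u ∈ -(K : Set E), ‖u‖ ≤ 1 ∧ r = ⟪w, u⟫}
      (Metric.infDist w (innerDual (K : Set E))) := by
  obtain ⟨z, hzC, hzw, horth, hdist⟩ := K.exists_mem_innerDual_infDist_eq w
  set q := w - z
  rw [hdist]
  constructor
  -- For `q = 0` this witness is `0`, since `‖0‖⁻¹ = 0`.
  · refine ⟨‖q‖⁻¹ • q, ?_, by simpa using inv_norm_smul_mem_unitClosedBall q, ?_⟩
    · simpa [q, ← smul_neg] using K.smul_mem hzw (inv_nonneg.2 (norm_nonneg q))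
    · have hwq : ⟪w, q⟫ = ‖q‖ ^ 2 := by
        rw [← real_inner_self_eq_norm_sq, show w = q + z by simp [q], inner_add_left,
          real_inner_comm q z, horth, add_zero]
      rw [real_inner_smul_right, hwq, ← div_eq_inv_mul, sq, mul_self_div_self]
  · rintro r ⟨u, hu, hu1, rfl⟩
    have hzu : ⟪z, u⟫ ≤ 0 := by simpa [real_inner_comm] using hzC hu
    calc ⟪w, u⟫ = ⟪q, u⟫ + ⟪z, u⟫ := by rw [← inner_add_left, sub_add_cancel]
      _ ≤ ‖q‖ * ‖u‖ := by linarith [real_inner_le_norm q u]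
      _ ≤ ‖q‖ := mul_le_of_le_one_right (norm_nonneg q) hu1

end ProperCone

/-- For a closed convex cone `K ⊆ ℝ^m` with dual cone
`K* = {v | ⟨v, u⟩ ≥ 0 ∀ u ∈ K}`, and any `w`, the distance `dist(w, K*)` equals the
maximum of `⟨w, u⟩` over `u ∈ -K` with `‖u‖ ≤ 1`. -/
theorem dist_to_dual_cone_eq_max
    {m : ℕ} (K : Set (EuclideanSpace ℝ (Fin m)))
    (hKclosed : IsClosed K) (hKconv : Convex ℝ K)
    (hKcone : ∀ u ∈ K, ∀ c : ℝ, 0 ≤ c → c • u ∈ K)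
    (hKne : K.Nonempty)
    (w : EuclideanSpace ℝ (Fin m)) :
    IsGreatest {r | ∃ u ∈ -K, ‖u‖ ≤ 1 ∧ r = ⟪w, u⟫}
      (Metric.infDist w {v | ∀ u ∈ K, 0 ≤ ⟪v, u⟫}) := by
  obtain ⟨C, rfl⟩ := exists_properCone_coe_eq hKclosed hKconv hKcone hKne
  have hdual : {v | ∀ u ∈ (C : Set _), 0 ≤ ⟪v, u⟫} =
      (ProperCone.innerDual (C : Set (EuclideanSpace ℝ (Fin m))) :
        Set (EuclideanSpace ℝ (Fin m))) := by
    ext v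
    simp [real_inner_comm v]
  rw [hdual]
  exact C.isGreatest_inner_infDist_innerDual w
end

section
/- Key recursion step of HOPS: let F : ℝ^d → ℝ be convex with minimum F_* attained on a nonempty convex compact set Ω_*, satisfying the local error bound dist(x, Ω_*) ≤ c(F(x) − F_*)^θ for all x ∈ S_ε, with θ ∈ (0,1], c > 0. Fix ε > 0, b > 1, ε_{s−1} > 0, and suppose x_{s−1} satisfies F(x_{s−1}) − F_* ≤ ε_{s−1} + ε with F(x_{s−1}) − F_* > ε. Let x†_{s−1,ε} be the projection of x_{s−1} onto S_ε. Then ‖x_{s−1} − x†_{s−1,ε}‖ ≤ c ε_{s−1}/ε^{1−θ}. -/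
/-- Key recursion step of HOPS. Under the local error bound
`dist(x, Ω*) ≤ c (F x - Fstar)^θ` on `S_ε`, if `F x_{s-1} - Fstar ≤ ε_{s-1} + ε` and
`F x_{s-1} - Fstar > ε`, and `xdag` is the projection of `x_{s-1}` onto `S_ε`, then
`‖x_{s-1} - xdag‖ ≤ c ε_{s-1} / ε^(1-θ)`. -/
theorem hops_recursion_step
    {d : ℕ} (F : EuclideanSpace ℝ (Fin d) → ℝ)
    (hF : ConvexOn ℝ Set.univ F)
    (Ωstar : Set (EuclideanSpace ℝ (Fin d))) (Fstar : ℝ)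
    (hΩ : Ωstar = {z | ∀ y, F z ≤ F y})
    (hΩne : Ωstar.Nonempty) (hΩconv : Convex ℝ Ωstar) (hΩcpt : IsCompact Ωstar)
    (hFstar : ∀ z ∈ Ωstar, F z = Fstar)
    (θ c : ℝ) (hθ0 : 0 < θ) (hθ1 : θ ≤ 1) (hc : 0 < c)
    (ε : ℝ) (hε : 0 < ε)
    (hLEB : ∀ x ∈ {z | F z ≤ Fstar + ε},
      Metric.infDist x Ωstar ≤ c * (F x - Fstar) ^ θ)
    (b : ℝ) (hb : 1 < b)
    (εs : ℝ) (hεs : 0 < εs)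
    (xprev xdag : EuclideanSpace ℝ (Fin d))
    (hupper : F xprev - Fstar ≤ εs + ε)
    (hlower : F xprev - Fstar > ε)
    (hmem : xdag ∈ {z | F z ≤ Fstar + ε})
    (hproj : ∀ z ∈ {z : EuclideanSpace ℝ (Fin d) | F z ≤ Fstar + ε},
      ‖xdag - xprev‖ ≤ ‖z - xprev‖) :
    ‖xprev - xdag‖ ≤ c * εs / ε ^ (1 - θ) := by
  have hmem' : F xdag ≤ Fstar + ε := hmem
  set D : ℝ := F xprev - Fstar with hDdef
  have hD : ε < D := hlower
  have hDpos : 0 < D := lt_trans hε hD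
  obtain ⟨xstar, hxstar, hdist⟩ := hΩcpt.exists_infDist_eq_dist hΩne xdag
  have hFxstar : F xstar = Fstar := hFstar _ hxstar
  have hmin : ∀ y, F xstar ≤ F y := by rw [hΩ] at hxstar; exact hxstar
  have hFs_le : Fstar ≤ F xdag := hFxstar ▸ hmin xdag
  have hεθ : (0:ℝ) < ε ^ θ := Real.rpow_pos_of_pos hε θ
  -- bound on the distance from xdag to Ωstar
  set B : ℝ := ‖xstar - xdag‖ with hBdef
  have hB0 : 0 ≤ B := norm_nonneg _
  have hB_le : B ≤ c * ε ^ θ := by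
    have h1 := hLEB xdag hmem
    have h2 : (F xdag - Fstar) ^ θ ≤ ε ^ θ :=
      Real.rpow_le_rpow (by linarith) (by linarith) hθ0.le
    have h3 : Metric.infDist xdag Ωstar = B := by
      rw [hdist, dist_eq_norm, ← norm_neg]; congr 1; abel
    nlinarith
  -- the convex combination landing in S_ε
  set t : ℝ := (D - ε) / D with htdef
  have ht0 : 0 ≤ t := div_nonneg (by linarith) hDpos.le
  have ht1 : t ≤ 1 := by rw [htdef, div_le_one hDpos]; linarith
  have htD : t * D = D - ε := by rw [htdef]; field_simp
  set z : EuclideanSpace ℝ (Fin d) := (1 - t) • xprev + t • xstar with hzdef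
  have hzmem : F z ≤ Fstar + ε := by
    have hcx := hF.2 (Set.mem_univ xprev) (Set.mem_univ xstar)
      (by linarith : (0:ℝ) ≤ 1 - t) ht0 (by ring)
    simp only [smul_eq_mul] at hcx
    rw [← hzdef] at hcx
    have heq : (1 - t) * F xprev + t * F xstar = Fstar + ε := by
      rw [hFxstar]; nlinarith [htD]
    linarith
  set A : ℝ := ‖xdag - xprev‖ with hAdef
  have hA0 : 0 ≤ A := norm_nonneg _
  have hAz : A ≤ ‖z - xprev‖ := hproj z hzmem
  have hz_eq : z - xprev = t • (xstar - xprev) := by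
    rw [hzdef]; module
  have hznorm : ‖z - xprev‖ = t * ‖xstar - xprev‖ := by
    rw [hz_eq, norm_smul, Real.norm_eq_abs, abs_of_nonneg ht0]
  have htri : ‖xstar - xprev‖ ≤ B + A := by
    have := norm_sub_le_norm_sub_add_norm_sub xstar xdag xprev
    linarith
  have hA_le : A ≤ t * (B + A) := by
    have h4 : t * ‖xstar - xprev‖ ≤ t * (B + A) :=
      mul_le_mul_of_nonneg_left htri ht0
    linarith [hAz, hznorm ▸ hAz]
  -- multiply through by D
  have hkey : ε * A ≤ (D - ε) * B := by
    have h5 : D * A ≤ (D - ε) * (B + A) := by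
      have := mul_le_mul_of_nonneg_left hA_le hDpos.le
      calc D * A ≤ D * (t * (B + A)) := this
        _ = (t * D) * (B + A) := by ring
        _ = (D - ε) * (B + A) := by rw [htD]
    nlinarith
  have hfin : A * ε ≤ c * εs * ε ^ θ := by
    have hDe : D - ε ≤ εs := by linarith
    have h6 : (D - ε) * B ≤ εs * B := mul_le_mul_of_nonneg_right hDe hB0
    have h7 : εs * B ≤ εs * (c * ε ^ θ) := mul_le_mul_of_nonneg_left hB_le hεs.le
    have h8 : εs * (c * ε ^ θ) = c * εs * ε ^ θ := by ring
    linarith only [hkey, h6, h7, h8]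
  have hnorm : ‖xprev - xdag‖ = A := by rw [hAdef, norm_sub_rev]
  rw [hnorm, Real.rpow_sub hε, Real.rpow_one, div_div_eq_mul_div, le_div_iff₀ hε]
  exact hfin
end

section
/- One-stage progress bound for HOPS: under the setup of the previous recursion, suppose additionally the APG subroutine run for t iterations from x_{s−1} on the smoothed objective guarantees F(x_s) − F(x†_{s−1,ε}) ≤ D²μ_s/2 + 2‖A‖²‖x_{s−1} − x†_{s−1,ε}‖²/(μ_s t²), with μ_s = ε_s/D² where ε_s = ε_{s−1}/b, and t ≥ 2bcD‖A‖/ε^{1−θ}. Then F(x_s) − F_* ≤ ε + ε_s. -/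
/-!
If `x` lies outside the sublevel set `S = {F ≤ F* + ε}`, then for a minimizer `x*` the point
`y = x* + ε / (F x - F*) • (x - x*)` still lies in `S` by convexity, so the projection `x†` of `x`
onto `S` is no farther from `x` than `y`. Comparing the two distances gives
`ε ‖x - x†‖ ≤ (F x - F* - ε) ‖x† - x*‖`, and the local error bound makes `‖x† - x*‖ ≤ c ε^θ` for
the minimizer `x*` nearest to `x†`. Hence `‖x - x†‖ ≤ c ε_{s-1} / ε^{1-θ}`, and the choice of `t`
makes the second term of the APG guarantee at most `ε_s / 2`, as is the first one.
-/

open Set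

theorem ConvexOn.mul_norm_sub_proj_le {E : Type*} [NormedAddCommGroup E] [NormedSpace ℝ E]
    {F : E → ℝ} (hF : ConvexOn ℝ univ F) {m ε δ : ℝ} (hε : 0 < ε) (hδ : 0 ≤ δ)
    {x xproj xmin : E} (hxmin : F xmin ≤ m) (hx : F x ≤ m + ε + δ)
    (hproj : ∀ z, F z ≤ m + ε → ‖xproj - x‖ ≤ ‖z - x‖) :
    ε * ‖xproj - x‖ ≤ δ * ‖xproj - xmin‖ := by
  by_cases hxS : F x ≤ m + ε
  · have : ‖xproj - x‖ = 0 := le_antisymm (by simpa using hproj x hxS) (norm_nonneg _)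
    rw [this, mul_zero]
    positivity
  set Δ := F x - m
  have hΔ : 0 < Δ := by linarith
  set s := ε / Δ
  have hs : s * Δ = ε := div_mul_cancel₀ ε hΔ.ne'
  have hs1 : s < 1 := (div_lt_one hΔ).2 (by linarith)
  have hs0 : 0 < s := div_pos hε hΔ
  set y := (1 - s) • xmin + s • x
  have hyS : F y ≤ m + ε := calc
    F y ≤ (1 - s) * F xmin + s * F x :=
      hF.2 (mem_univ _) (mem_univ _) (by linarith) hs0.le (by ring)
    _ ≤ (1 - s) * m + s * F x := by gcongr
    _ = m + ε := by rw [← hs]; ring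
  have hyx : ‖y - x‖ = (1 - s) * ‖xmin - x‖ := by
    rw [show y - x = (1 - s) • (xmin - x) by module, norm_smul, Real.norm_of_nonneg (by linarith)]
  have hclose : ‖xproj - x‖ ≤ (1 - s) * (‖xproj - xmin‖ + ‖xproj - x‖) := calc
    ‖xproj - x‖ ≤ ‖y - x‖ := hproj y hyS
    _ = (1 - s) * ‖xmin - x‖ := hyx
    _ ≤ (1 - s) * (‖xproj - xmin‖ + ‖xproj - x‖) := by
      gcongr
      rw [norm_sub_rev xproj xmin]
      exact norm_sub_le_norm_sub_add_norm_sub _ _ _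
  have hR := norm_nonneg (xproj - xmin)
  calc ε * ‖xproj - x‖ = Δ * (s * ‖xproj - x‖) := by rw [← hs]; ring
    _ ≤ Δ * ((1 - s) * ‖xproj - xmin‖) := mul_le_mul_of_nonneg_left (by linarith) hΔ.le
    _ = (Δ - ε) * ‖xproj - xmin‖ := by rw [← hs]; ring
    _ ≤ δ * ‖xproj - xmin‖ := by gcongr; linarith

theorem le_div_rpow_one_sub_of_mul_le {ε θ d K : ℝ} (hε : 0 < ε) (h : ε * d ≤ K * ε ^ θ) :
    d ≤ K / ε ^ (1 - θ) := by
  have hεθ : 0 < ε ^ θ := Real.rpow_pos_of_pos hε θ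
  rw [le_div_iff₀ (Real.rpow_pos_of_pos hε _), Real.rpow_sub hε, Real.rpow_one, mul_div_assoc',
    div_le_iff₀ hεθ]
  linarith

theorem smoothing_sq_div_add_le {D A εs t r : ℝ} (hD : 0 < D) (hA : 0 < A) (hεs : 0 < εs)
    (ht : 0 < t) (hr : 0 ≤ r) (h : 2 * D * A * r ≤ εs * t) :
    D ^ 2 * (εs / D ^ 2) / 2 + 2 * A ^ 2 * r ^ 2 / (εs / D ^ 2 * t ^ 2) ≤ εs := by
  have hsq : (2 * D * A * r) ^ 2 ≤ (εs * t) ^ 2 := pow_le_pow_left₀ (by positivity) h 2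
  rw [show D ^ 2 * (εs / D ^ 2) / 2 = εs / 2 by field_simp, ← le_sub_iff_add_le',
    div_le_iff₀ (by positivity)]
  field_simp
  nlinarith

theorem hops_one_stage_progress_general
    {d : ℕ} (F : EuclideanSpace ℝ (Fin d) → ℝ)
    (hF : ConvexOn ℝ Set.univ F)
    (Ωstar : Set (EuclideanSpace ℝ (Fin d))) (Fstar : ℝ)
    (hΩ : Ωstar = {z | ∀ y, F z ≤ F y})
    (hΩne : Ωstar.Nonempty) (hΩcpt : IsCompact Ωstar)
    (hFstar : ∀ z ∈ Ωstar, F z = Fstar)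
    (θ c : ℝ) (hθ0 : 0 < θ) (hc : 0 < c)
    (ε : ℝ) (hε : 0 < ε)
    (hLEB : ∀ x ∈ {z | F z ≤ Fstar + ε},
      Metric.infDist x Ωstar ≤ c * (F x - Fstar) ^ θ)
    (b : ℝ) (hb : 1 < b)
    (D normA : ℝ) (hD : 0 < D) (hA : 0 < normA)
    (εprev εs μs : ℝ) (hεprev : 0 < εprev) (hεsdef : εs = εprev / b)
    (hμs : μs = εs / D ^ 2)
    (t : ℝ) (ht : t ≥ 2 * b * c * D * normA / ε ^ (1 - θ))
    (xprev xs xdag : EuclideanSpace ℝ (Fin d))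
    (hupper : F xprev - Fstar ≤ εprev + ε)
    (hmem : xdag ∈ {z | F z ≤ Fstar + ε})
    (hproj : ∀ z ∈ {z : EuclideanSpace ℝ (Fin d) | F z ≤ Fstar + ε},
      ‖xdag - xprev‖ ≤ ‖z - xprev‖)
    (hAPG : F xs - F xdag ≤ D ^ 2 * μs / 2 + 2 * normA ^ 2 * ‖xprev - xdag‖ ^ 2 / (μs * t ^ 2)) :
    F xs - Fstar ≤ ε + εs := by
  have hmem' : F xdag ≤ Fstar + ε := hmem
  obtain ⟨xstar, hxstar, hdist⟩ := hΩcpt.exists_infDist_eq_dist hΩne xdag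
  have hFxstar := hFstar xstar hxstar
  have hFstar_le : Fstar ≤ F xdag := hFxstar ▸ (hΩ ▸ hxstar : xstar ∈ {z | ∀ y, F z ≤ F y}) xdag
  have hdag_star : ‖xdag - xstar‖ ≤ c * ε ^ θ := calc
    ‖xdag - xstar‖ = Metric.infDist xdag Ωstar := by rw [hdist, dist_eq_norm]
    _ ≤ c * (F xdag - Fstar) ^ θ := hLEB xdag hmem
    _ ≤ c * ε ^ θ := by gcongr; linarith
  have hshift : ‖xprev - xdag‖ ≤ εprev * c / ε ^ (1 - θ) := by
    refine le_div_rpow_one_sub_of_mul_le hε ?_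
    calc ε * ‖xprev - xdag‖ ≤ εprev * ‖xdag - xstar‖ := by
          rw [norm_sub_rev]
          exact hF.mul_norm_sub_proj_le hε hεprev.le hFxstar.le (by linarith) hproj
      _ ≤ εprev * c * ε ^ θ := by rw [mul_assoc]; gcongr
  have hb0 : 0 < b := by linarith
  have hεs : 0 < εs := by rw [hεsdef]; positivity
  have hscale : 2 * D * normA * ‖xprev - xdag‖ ≤ εs * t := calc
    2 * D * normA * ‖xprev - xdag‖ ≤ 2 * D * normA * (εprev * c / ε ^ (1 - θ)) := by gcongr
    _ = εs * (2 * b * c * D * normA / ε ^ (1 - θ)) := by rw [hεsdef]; field_simp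
    _ ≤ εs * t := by gcongr
  have htpos : 0 < t := lt_of_lt_of_le (by positivity) ht
  have := smoothing_sq_div_add_le hD hA hεs htpos (norm_nonneg _) hscale
  rw [hμs] at hAPG
  linarith

/-- One-stage progress bound for HOPS. Under the local error bound and with
the APG guarantee
`F x_s - F xdag ≤ D² μ_s / 2 + 2‖A‖² ‖x_{s-1} - xdag‖² / (μ_s t²)`,
where `μ_s = ε_s/D²`, `ε_s = ε_{s-1}/b`, and `t ≥ 2 b c D ‖A‖ / ε^(1-θ)`, if
`F x_{s-1} - Fstar ≤ ε_{s-1} + ε` then `F x_s - Fstar ≤ ε + ε_s`. -/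
theorem hops_one_stage_progress
    {d : ℕ} (F : EuclideanSpace ℝ (Fin d) → ℝ)
    (hF : ConvexOn ℝ Set.univ F)
    (Ωstar : Set (EuclideanSpace ℝ (Fin d))) (Fstar : ℝ)
    (hΩ : Ωstar = {z | ∀ y, F z ≤ F y})
    (hΩne : Ωstar.Nonempty) (hΩconv : Convex ℝ Ωstar) (hΩcpt : IsCompact Ωstar)
    (hFstar : ∀ z ∈ Ωstar, F z = Fstar)
    (θ c : ℝ) (hθ0 : 0 < θ) (hθ1 : θ ≤ 1) (hc : 0 < c)
    (ε : ℝ) (hε : 0 < ε)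
    (hLEB : ∀ x ∈ {z | F z ≤ Fstar + ε},
      Metric.infDist x Ωstar ≤ c * (F x - Fstar) ^ θ)
    (b : ℝ) (hb : 1 < b)
    (D normA : ℝ) (hD : 0 < D) (hA : 0 < normA)
    (εprev εs μs : ℝ) (hεprev : 0 < εprev) (hεsdef : εs = εprev / b)
    (hμs : μs = εs / D ^ 2)
    (t : ℝ) (ht : t ≥ 2 * b * c * D * normA / ε ^ (1 - θ))
    (xprev xs xdag : EuclideanSpace ℝ (Fin d))
    (hupper : F xprev - Fstar ≤ εprev + ε)
    (hmem : xdag ∈ {z | F z ≤ Fstar + ε})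
    (hproj : ∀ z ∈ {z : EuclideanSpace ℝ (Fin d) | F z ≤ Fstar + ε},
      ‖xdag - xprev‖ ≤ ‖z - xprev‖)
    (hAPG : F xs - F xdag ≤ D ^ 2 * μs / 2 + 2 * normA ^ 2 * ‖xprev - xdag‖ ^ 2 / (μs * t ^ 2)) :
    F xs - Fstar ≤ ε + εs :=
  hops_one_stage_progress_general F hF Ωstar Fstar hΩ hΩne hΩcpt hFstar θ c hθ0 hc ε hε hLEB b hb D
    normA hD hA εprev εs μs hεprev hεsdef hμs t ht xprev xs xdag hupper hmem hproj hAPG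
end

section
/- Strong convexity of squared p-norm: for p ∈ (1, 2], the function x ↦ (1/2)‖x‖_p² on ℝ^d is (p−1)-strongly convex with respect to the norm ‖·‖_p, i.e., for all x, y and t ∈ [0,1], (1/2)‖tx + (1−t)y‖_p² ≤ t(1/2)‖x‖_p² + (1−t)(1/2)‖y‖_p² − ((p−1)/2)t(1−t)‖x−y‖_p². -/
/-!
Along the segment from `y` to `x`, the claim is the convexity of
`F s = ½‖s x + (1 - s) y‖² - ((p - 1)/2) s² ‖x - y‖²`; since `F` is continuous, midpoint
convexity suffices, and that is the 2-uniform convexity inequality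
`‖a‖² + (p - 1)‖b‖² ≤ (‖a + b‖² + ‖a - b‖²)/2` of Ball, Carlen and Lieb.
Coordinatewise it is the two-point inequality
`(a² + (p - 1) b²)^(p/2) ≤ (|a + b|^p + |a - b|^p)/2`, which follows from Bernoulli's inequality
and `((1 + r)^p + (1 - r)^p)/2 ≥ 1 + p(p - 1) r²/2`. The coordinates are reassembled by the
reverse Minkowski inequality in `ℓ^(p/2)` (here `p/2 ≤ 1`) and the power-mean inequality.
-/

open Real Set Finset

theorem two_mul_mul_le_one_add_rpow_sub_one_sub_rpow {q : ℝ} (hq0 : 0 < q) (hq1 : q ≤ 1)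
    {r : ℝ} (hr : r ∈ Icc (0 : ℝ) 1) : 2 * q * r ≤ (1 + r) ^ q - (1 - r) ^ q := by
  let ψ : ℝ → ℝ := fun r => (1 + r) ^ q - (1 - r) ^ q - 2 * q * r
  have hψ_cont : Continuous ψ := by
    have := continuous_rpow_const hq0.le
    fun_prop
  have hψ_deriv : ∀ x ∈ interior (Icc (0 : ℝ) 1), HasDerivWithinAt ψ
      (q * ((1 + x) ^ (q - 1) + (1 - x) ^ (q - 1) - 2)) (interior (Icc (0 : ℝ) 1)) x := by
    rw [interior_Icc]
    rintro x ⟨hx0, hx1⟩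
    have hplus := ((hasDerivAt_id' x).const_add 1).rpow_const (p := q) (Or.inl (by linarith))
    have hminus := ((hasDerivAt_id' x).const_sub 1).rpow_const (p := q) (Or.inl (by linarith))
    exact (((hplus.sub hminus).sub ((hasDerivAt_id' x).const_mul (2 * q))).congr_deriv
      (by ring)).hasDerivWithinAt
  have hψ_deriv_nonneg : ∀ x ∈ interior (Icc (0 : ℝ) 1),
      0 ≤ q * ((1 + x) ^ (q - 1) + (1 - x) ^ (q - 1) - 2) := by
    rw [interior_Icc]
    rintro x ⟨hx0, hx1⟩
    -- the product of the two powers is `(1 - x²) ^ (q - 1) ≥ 1`, so AM-GM gives their sum `≥ 2`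
    have hprod : 1 ≤ (1 + x) ^ (q - 1) * (1 - x) ^ (q - 1) := by
      rw [← mul_rpow (by linarith) (by linarith)]
      exact one_le_rpow_of_pos_of_le_one_of_nonpos (by nlinarith) (by nlinarith) (by linarith)
    have hplus : 0 < (1 + x) ^ (q - 1) := rpow_pos_of_pos (by linarith) _
    have hminus : 0 < (1 - x) ^ (q - 1) := rpow_pos_of_pos (by linarith) _
    have : 2 ≤ (1 + x) ^ (q - 1) + (1 - x) ^ (q - 1) := by
      nlinarith [sq_nonneg ((1 + x) ^ (q - 1) - (1 - x) ^ (q - 1))]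
    exact mul_nonneg hq0.le (by linarith)
  have hmono := monotoneOn_of_hasDerivWithinAt_nonneg (convex_Icc 0 1) hψ_cont.continuousOn
    hψ_deriv hψ_deriv_nonneg
  have := hmono (left_mem_Icc.2 zero_le_one) hr hr.1
  simp only [ψ, add_zero, sub_zero, one_rpow, mul_zero, sub_self] at this
  linarith

theorem one_add_mul_sq_le_add_rpow_div_two {p : ℝ} (hp1 : 1 < p) (hp2 : p ≤ 2)
    {r : ℝ} (hr : r ∈ Icc (0 : ℝ) 1) :
    1 + p * (p - 1) / 2 * r ^ 2 ≤ ((1 + r) ^ p + (1 - r) ^ p) / 2 := by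
  let φ : ℝ → ℝ := fun r => ((1 + r) ^ p + (1 - r) ^ p) / 2 - p * (p - 1) / 2 * r ^ 2
  have hφ_cont : Continuous φ := by
    have := continuous_rpow_const (by linarith : (0 : ℝ) ≤ p)
    fun_prop
  have hφ_deriv : ∀ x ∈ interior (Icc (0 : ℝ) 1), HasDerivWithinAt φ
      (p / 2 * ((1 + x) ^ (p - 1) - (1 - x) ^ (p - 1) - 2 * (p - 1) * x))
      (interior (Icc (0 : ℝ) 1)) x := by
    rw [interior_Icc]
    rintro x ⟨hx0, hx1⟩
    have hplus := ((hasDerivAt_id' x).const_add 1).rpow_const (p := p) (Or.inl (by linarith))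
    have hminus := ((hasDerivAt_id' x).const_sub 1).rpow_const (p := p) (Or.inl (by linarith))
    exact ((((hplus.add hminus).div_const 2).sub
      ((hasDerivAt_pow 2 x).const_mul (p * (p - 1) / 2))).congr_deriv
      (by push_cast; ring)).hasDerivWithinAt
  have hφ_deriv_nonneg : ∀ x ∈ interior (Icc (0 : ℝ) 1),
      0 ≤ p / 2 * ((1 + x) ^ (p - 1) - (1 - x) ^ (p - 1) - 2 * (p - 1) * x) := by
    rw [interior_Icc]
    intro x hx
    have := two_mul_mul_le_one_add_rpow_sub_one_sub_rpow (q := p - 1) (by linarith)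
      (by linarith) (Ioo_subset_Icc_self hx)
    exact mul_nonneg (by linarith) (by linarith)
  have hmono := monotoneOn_of_hasDerivWithinAt_nonneg (convex_Icc 0 1) hφ_cont.continuousOn
    hφ_deriv hφ_deriv_nonneg
  have := hmono (left_mem_Icc.2 zero_le_one) hr hr.1
  simp only [φ, add_zero, sub_zero, one_rpow, ne_eq, OfNat.ofNat_ne_zero, not_false_eq_true,
    zero_pow, mul_zero] at this
  linarith

theorem rpow_sq_add_mul_sq_le_of_nonneg_of_le {p : ℝ} (hp1 : 1 < p) (hp2 : p ≤ 2) {a b : ℝ}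
    (hb : 0 ≤ b) (hba : b ≤ a) :
    (a ^ 2 + (p - 1) * b ^ 2) ^ (p / 2) ≤ ((a + b) ^ p + (a - b) ^ p) / 2 := by
  have hp0 : 0 < p := by linarith
  obtain rfl | ha := (hb.trans hba).eq_or_lt
  · obtain rfl : b = 0 := le_antisymm hba hb
    simp [zero_rpow hp0.ne', zero_rpow (by positivity : p / 2 ≠ 0)]
  set r := b / a
  have hr : r ∈ Icc (0 : ℝ) 1 := ⟨div_nonneg hb ha.le, (div_le_one ha).2 hba⟩
  have hb_eq : b = a * r := by simp only [r]; field_simp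
  have bernoulli : (1 + (p - 1) * r ^ 2) ^ (p / 2) ≤ 1 + p / 2 * ((p - 1) * r ^ 2) :=
    rpow_one_add_le_one_add_mul_self (by nlinarith) (by positivity) (by linarith)
  calc (a ^ 2 + (p - 1) * b ^ 2) ^ (p / 2)
      = a ^ p * (1 + (p - 1) * r ^ 2) ^ (p / 2) := by
        rw [hb_eq, show a ^ 2 + (p - 1) * (a * r) ^ 2 = a ^ 2 * (1 + (p - 1) * r ^ 2) by ring,
          mul_rpow (by positivity) (by nlinarith), ← rpow_natCast, ← rpow_mul ha.le]
        congr 2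
        push_cast
        ring
    _ ≤ a ^ p * (((1 + r) ^ p + (1 - r) ^ p) / 2) := by
        gcongr
        linarith [one_add_mul_sq_le_add_rpow_div_two hp1 hp2 hr]
    _ = ((a + b) ^ p + (a - b) ^ p) / 2 := by
        rw [hb_eq, show a + a * r = a * (1 + r) by ring, show a - a * r = a * (1 - r) by ring,
          mul_rpow ha.le (by linarith [hr.1]), mul_rpow ha.le (by linarith [hr.2])]
        ring

theorem rpow_sq_add_mul_sq_le {p : ℝ} (hp1 : 1 < p) (hp2 : p ≤ 2) (a b : ℝ) :
    (a ^ 2 + (p - 1) * b ^ 2) ^ (p / 2) ≤ (|a + b| ^ p + |a - b| ^ p) / 2 := by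
  wlog hba : |b| ≤ |a| generalizing a b
  · have hab : a ^ 2 ≤ b ^ 2 := sq_le_sq.2 (le_of_not_ge hba)
    calc (a ^ 2 + (p - 1) * b ^ 2) ^ (p / 2) ≤ (b ^ 2 + (p - 1) * a ^ 2) ^ (p / 2) :=
          rpow_le_rpow (by nlinarith) (by nlinarith) (by linarith)
      _ ≤ (|a + b| ^ p + |a - b| ^ p) / 2 := by
          simpa only [add_comm b a, abs_sub_comm b a] using this b a (le_of_not_ge hba)
  wlog hb : 0 ≤ b generalizing b
  · simpa only [neg_sq, ← sub_eq_add_neg, sub_neg_eq_add, add_comm (|a - b| ^ p)] using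
      this (-b) (by rwa [abs_neg]) (by linarith)
  wlog ha : 0 ≤ a generalizing a
  · have := this (-a) (by rwa [abs_neg]) (by linarith [abs_le.1 hba])
    rwa [neg_sq, neg_add_eq_sub, abs_sub_comm b a, ← neg_add', abs_neg,
      add_comm (|a - b| ^ p)] at this
  rw [abs_of_nonneg hb, abs_of_nonneg ha] at hba
  rw [abs_of_nonneg (by linarith), abs_of_nonneg (by linarith)]
  exact rpow_sq_add_mul_sq_le_of_nonneg_of_le hp1 hp2 hb hba

theorem le_chord_of_midpoint_convex {F : ℝ → ℝ} (hF : ContinuousOn F (Icc 0 1))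
    (hmid : ∀ a ∈ Icc (0 : ℝ) 1, ∀ b ∈ Icc (0 : ℝ) 1, F ((a + b) / 2) ≤ (F a + F b) / 2)
    {t : ℝ} (ht : t ∈ Icc (0 : ℝ) 1) : F t ≤ t * F 1 + (1 - t) * F 0 := by
  let G : ℝ → ℝ := fun s => s * F 1 + (1 - s) * F 0 - F s
  have hG : ContinuousOn G (Icc 0 1) := by fun_prop
  suffices 0 ≤ G t by simp only [G] at this; linarith
  obtain ⟨s, hs, hs_min⟩ := isCompact_Icc.exists_isMinOn (nonempty_Icc.2 zero_le_one) hG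
  by_contra! hneg
  have hGs : G s < 0 := (hs_min ht).trans_lt hneg
  -- midpoint concavity of `G` fails at its leftmost minimiser `s₀`, which is interior
  have hM : IsCompact (Icc (0 : ℝ) 1 ∩ G ⁻¹' {G s}) :=
    isCompact_Icc.of_isClosed_subset
      (hG.preimage_isClosed_of_isClosed isClosed_Icc isClosed_singleton) inter_subset_left
  obtain ⟨s₀, ⟨hs₀, hGs₀ : G s₀ = G s⟩, hleast⟩ := hM.exists_isLeast ⟨s, hs, rfl⟩
  have hG0 : G 0 = 0 := by simp [G]
  have hG1 : G 1 = 0 := by simp [G]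
  have hs₀0 : 0 < s₀ := hs₀.1.lt_of_ne fun h => by rw [← h, hG0] at hGs₀; linarith
  have hs₀1 : s₀ < 1 := hs₀.2.lt_of_ne fun h => by rw [h, hG1] at hGs₀; linarith
  set δ := min s₀ (1 - s₀)
  have hδ : 0 < δ := lt_min hs₀0 (by linarith)
  have hleft : s₀ - δ ∈ Icc (0 : ℝ) 1 := ⟨by linarith [min_le_left s₀ (1 - s₀)], by linarith⟩
  have hright : s₀ + δ ∈ Icc (0 : ℝ) 1 := ⟨by linarith, by linarith [min_le_right s₀ (1 - s₀)]⟩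
  have hGleft : G s < G (s₀ - δ) := (hs_min hleft).lt_of_ne fun heq =>
    (by linarith [hleast ⟨hleft, heq.symm⟩] : False)
  have hGright : G s ≤ G (s₀ + δ) := hs_min hright
  have hGmid : (G (s₀ - δ) + G (s₀ + δ)) / 2 ≤ G s₀ := by
    have := hmid (s₀ - δ) hleft (s₀ + δ) hright
    rw [show (s₀ - δ + (s₀ + δ)) / 2 = s₀ by ring] at this
    simp only [G]
    linarith
  linarith

section pNorm

variable {d : ℕ} {p : ℝ}

theorem sum_abs_rpow_nonneg (p : ℝ) (z : Fin d → ℝ) : 0 ≤ ∑ i, |z i| ^ p :=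
  sum_nonneg fun _ _ => rpow_nonneg (abs_nonneg _) _

theorem pNorm_nonneg (p : ℝ) (z : Fin d → ℝ) : 0 ≤ pNorm p z :=
  rpow_nonneg (sum_abs_rpow_nonneg p z) _

theorem pNorm_rpow (hp : p ≠ 0) (z : Fin d → ℝ) : pNorm p z ^ p = ∑ i, |z i| ^ p := by
  rw [pNorm, ← rpow_mul (sum_abs_rpow_nonneg _ _), one_div,
    inv_mul_cancel₀ hp, rpow_one]

theorem pNorm_smul (hp : p ≠ 0) (c : ℝ) (z : Fin d → ℝ) : pNorm p (c • z) = |c| * pNorm p z := by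
  simp only [pNorm, Pi.smul_apply, smul_eq_mul, abs_mul, mul_rpow (abs_nonneg c) (abs_nonneg _),
    ← mul_sum]
  rw [mul_rpow (rpow_nonneg (abs_nonneg c) p) (sum_abs_rpow_nonneg _ _),
    ← rpow_mul (abs_nonneg c), mul_one_div_cancel hp, rpow_one]

theorem continuous_pNorm (hp : 0 < p) : Continuous (pNorm (d := d) p) := by
  have := continuous_rpow_const hp.le
  have := continuous_rpow_const (one_div_pos.2 hp).le
  unfold pNorm
  fun_prop

theorem pNorm_le_pNorm_of_abs_le (hp : 0 < p) {f g : Fin d → ℝ} (hfg : ∀ i, |f i| ≤ |g i|) :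
    pNorm p f ≤ pNorm p g :=
  rpow_le_rpow (sum_abs_rpow_nonneg _ _)
    (sum_le_sum fun i _ => rpow_le_rpow (abs_nonneg _) (hfg i) hp.le) (by positivity)

theorem sq_pNorm (hp : 0 < p) (z : Fin d → ℝ) :
    pNorm p z ^ 2 = pNorm (p / 2) (fun i => z i ^ 2) := by
  have hterm : ∀ i, |z i ^ 2| ^ (p / 2) = |z i| ^ p := fun i => by
    rw [abs_pow, ← rpow_natCast, ← rpow_mul (abs_nonneg _)]
    ring_nf
  simp only [pNorm, hterm]
  rw [← rpow_natCast, ← rpow_mul (sum_abs_rpow_nonneg _ _)]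
  congr 1
  push_cast
  field_simp

theorem pNorm_add_pNorm_le_of_nonneg (hp0 : 0 < p) (hp1 : p ≤ 1) {f g : Fin d → ℝ}
    (hf : ∀ i, 0 ≤ f i) (hg : ∀ i, 0 ≤ g i) : pNorm p f + pNorm p g ≤ pNorm p (f + g) := by
  have hfg : ∀ i, 0 ≤ (f + g) i := fun i => add_nonneg (hf i) (hg i)
  have hrpow : ∀ {h : Fin d → ℝ}, (∀ i, 0 ≤ h i) → ∑ i, h i ^ p = pNorm p h ^ p := fun hh => by
    rw [pNorm_rpow hp0.ne']
    exact sum_congr rfl fun i _ => by rw [abs_of_nonneg (hh i)]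
  rcases (pNorm_nonneg p f).eq_or_lt with hS | hS
  · rw [← hS, zero_add]
    exact pNorm_le_pNorm_of_abs_le hp0 fun i =>
      abs_le_abs_of_nonneg (hg i) (le_add_of_nonneg_left (hf i))
  rcases (pNorm_nonneg p g).eq_or_lt with hT | hT
  · rw [← hT, add_zero]
    exact pNorm_le_pNorm_of_abs_le hp0 fun i =>
      abs_le_abs_of_nonneg (hf i) (le_add_of_nonneg_right (hg i))
  set S := pNorm p f
  set T := pNorm p g
  have hST : 0 < S + T := add_pos hS hT
  have hsum_eq_one : ∀ {h : Fin d → ℝ}, (∀ i, 0 ≤ h i) → 0 < pNorm p h →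
      ∑ i, (h i / pNorm p h) ^ p = 1 := fun hh hpos => by
    simp only [div_rpow (hh _) hpos.le, ← sum_div, hrpow hh]
    exact div_self (rpow_pos_of_pos hpos p).ne'
  -- concavity of `t ↦ t ^ p`, applied coordinatewise to the unit vectors `f / S` and `g / T`
  have hconcave : ∀ i, S / (S + T) * (f i / S) ^ p + T / (S + T) * (g i / T) ^ p ≤
      ((f + g) i / (S + T)) ^ p := fun i => by
    have := (concaveOn_rpow hp0.le hp1).2 (mem_Ici.2 (div_nonneg (hf i) hS.le))
      (mem_Ici.2 (div_nonneg (hg i) hT.le)) (div_nonneg hS.le hST.le) (div_nonneg hT.le hST.le)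
      (by field_simp)
    have hmix : S / (S + T) * (f i / S) + T / (S + T) * (g i / T) = (f + g) i / (S + T) := by
      simp only [Pi.add_apply]
      field_simp
    simpa only [smul_eq_mul, hmix] using this
  have hsum : 1 ≤ ∑ i, ((f + g) i / (S + T)) ^ p :=
    calc (1 : ℝ) = S / (S + T) * ∑ i, (f i / S) ^ p + T / (S + T) * ∑ i, (g i / T) ^ p := by
          rw [hsum_eq_one hf hS, hsum_eq_one hg hT]
          field_simp
      _ ≤ ∑ i, ((f + g) i / (S + T)) ^ p := by
          rw [mul_sum, mul_sum, ← sum_add_distrib]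
          exact sum_le_sum fun i _ => hconcave i
  simp only [div_rpow (hfg _) hST.le, ← sum_div, hrpow hfg] at hsum
  rw [one_le_div (rpow_pos_of_pos hST p)] at hsum
  exact (rpow_le_rpow_iff hST.le (pNorm_nonneg _ _) hp0).1 hsum

theorem sq_pNorm_add_mul_sq_pNorm_le (hp1 : 1 < p) (hp2 : p ≤ 2) (a b : Fin d → ℝ) :
    pNorm p a ^ 2 + (p - 1) * pNorm p b ^ 2 ≤
      ((pNorm p (a + b) ^ p + pNorm p (a - b) ^ p) / 2) ^ (2 / p) := by
  have hp0 : 0 < p := by linarith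
  calc pNorm p a ^ 2 + (p - 1) * pNorm p b ^ 2
      = pNorm (p / 2) (fun i => a i ^ 2) + pNorm (p / 2) ((p - 1) • fun i => b i ^ 2) := by
        rw [sq_pNorm hp0, sq_pNorm hp0, pNorm_smul (by positivity), abs_of_pos (by linarith)]
    _ ≤ pNorm (p / 2) ((fun i => a i ^ 2) + (p - 1) • fun i => b i ^ 2) :=
        pNorm_add_pNorm_le_of_nonneg (by positivity) (by linarith) (fun i => sq_nonneg (a i))
          fun i => mul_nonneg (by linarith) (sq_nonneg (b i))
    _ = (∑ i, (a i ^ 2 + (p - 1) * b i ^ 2) ^ (p / 2)) ^ (2 / p) := by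
        rw [pNorm, one_div_div]
        congr 1
        refine sum_congr rfl fun i _ => ?_
        rw [abs_of_nonneg (by simp only [Pi.add_apply, Pi.smul_apply, smul_eq_mul]; nlinarith)]
        rfl
    _ ≤ (∑ i, (|a i + b i| ^ p + |a i - b i| ^ p) / 2) ^ (2 / p) := by
        gcongr with i
        exact rpow_sq_add_mul_sq_le hp1 hp2 (a i) (b i)
    _ = ((pNorm p (a + b) ^ p + pNorm p (a - b) ^ p) / 2) ^ (2 / p) := by
        rw [pNorm_rpow hp0.ne', pNorm_rpow hp0.ne', ← sum_add_distrib, sum_div]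
        rfl

theorem sq_pNorm_add_mul_sq_pNorm_le_sq_add_sq (hp1 : 1 < p) (hp2 : p ≤ 2) (a b : Fin d → ℝ) :
    pNorm p a ^ 2 + (p - 1) * pNorm p b ^ 2 ≤ (pNorm p (a + b) ^ 2 + pNorm p (a - b) ^ 2) / 2 := by
  have hp0 : 0 < p := by linarith
  have hpow : ∀ z : Fin d → ℝ, (pNorm p z ^ p) ^ (2 / p) = pNorm p z ^ 2 := fun z => by
    rw [← rpow_mul (pNorm_nonneg p z), mul_div_cancel₀ _ hp0.ne', rpow_two]
  have hconvex := (convexOn_rpow ((one_le_div hp0).2 hp2)).2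
    (rpow_nonneg (pNorm_nonneg p (a + b)) p) (rpow_nonneg (pNorm_nonneg p (a - b)) p)
    (by norm_num : (0 : ℝ) ≤ 1 / 2) (by norm_num : (0 : ℝ) ≤ 1 / 2) (by norm_num)
  simp only [smul_eq_mul, hpow] at hconvex
  calc pNorm p a ^ 2 + (p - 1) * pNorm p b ^ 2
      ≤ ((pNorm p (a + b) ^ p + pNorm p (a - b) ^ p) / 2) ^ (2 / p) :=
        sq_pNorm_add_mul_sq_pNorm_le hp1 hp2 a b
    _ = (1 / 2 * pNorm p (a + b) ^ p + 1 / 2 * pNorm p (a - b) ^ p) ^ (2 / p) := by ring_nf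
    _ ≤ 1 / 2 * pNorm p (a + b) ^ 2 + 1 / 2 * pNorm p (a - b) ^ 2 := hconvex
    _ = (pNorm p (a + b) ^ 2 + pNorm p (a - b) ^ 2) / 2 := by ring

end pNorm

/-- Strong convexity of the squared `p`-norm: for `p ∈ (1,2]`, the function
`x ↦ (1/2)‖x‖_p²` is `(p-1)`-strongly convex with respect to `‖·‖_p`. -/
theorem half_sq_pnorm_strongly_convex
    {d : ℕ} (p : ℝ) (hp1 : 1 < p) (hp2 : p ≤ 2) :
    ∀ (x y : Fin d → ℝ) (t : ℝ), 0 ≤ t → t ≤ 1 →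
      (1 / 2) * (pNorm p (t • x + (1 - t) • y)) ^ 2 ≤
        t * ((1 / 2) * (pNorm p x) ^ 2) + (1 - t) * ((1 / 2) * (pNorm p y) ^ 2) -
          ((p - 1) / 2) * t * (1 - t) * (pNorm p (x - y)) ^ 2 := by
  intro x y t ht0 ht1
  have hp0 : 0 < p := by linarith
  let X : ℝ → Fin d → ℝ := fun s => s • x + (1 - s) • y
  let F : ℝ → ℝ := fun s => 1 / 2 * pNorm p (X s) ^ 2 - (p - 1) / 2 * s ^ 2 * pNorm p (x - y) ^ 2
  have hF_cont : ContinuousOn F (Icc 0 1) := by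
    have := continuous_pNorm (d := d) hp0
    fun_prop
  have hF_mid : ∀ a ∈ Icc (0 : ℝ) 1, ∀ b ∈ Icc (0 : ℝ) 1, F ((a + b) / 2) ≤ (F a + F b) / 2 := by
    intro a _ b _
    have h := sq_pNorm_add_mul_sq_pNorm_le_sq_add_sq hp1 hp2
      ((1 / 2 : ℝ) • (X a + X b)) ((1 / 2 : ℝ) • (X a - X b))
    rw [show (1 / 2 : ℝ) • (X a + X b) + (1 / 2 : ℝ) • (X a - X b) = X a by module,
      show (1 / 2 : ℝ) • (X a + X b) - (1 / 2 : ℝ) • (X a - X b) = X b by module,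
      show (1 / 2 : ℝ) • (X a + X b) = X ((a + b) / 2) by module,
      show (1 / 2 : ℝ) • (X a - X b) = ((a - b) / 2) • (x - y) by module,
      pNorm_smul hp0.ne', mul_pow, sq_abs] at h
    simp only [F]
    linear_combination h / 2
  have := le_chord_of_midpoint_convex hF_cont hF_mid ⟨ht0, ht1⟩
  simp only [F, X, one_smul, zero_smul, add_zero, zero_add, sub_zero, sub_self] at this
  linear_combination this
end

section
/- Lagrange multiplier bound in the proof of the global error inequality: with F convex, Ω_* = argmin F convex compact, F_* = min F, ε > 0, x ∉ S_ε, and x_ε† the projection of x onto S_ε, any Lagrange multiplier ζ > 0 satisfying the optimality condition (x_ε† − x + ζ v)ᵀ(z − x_ε†) ≥ 0 for all z ∈ Ω₁ (with v ∈ ∂F(x_ε†)) obeys ζ ≤ dist(x_ε†, Ω_*) ‖x_ε† − x‖ / ε. -/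
open scoped RealInnerProductSpace

/-- Lagrange multiplier bound in the proof of the global error inequality.
With `F` convex on the closed convex set `Ω₁`, `Ω*` the (convex compact nonempty) argmin
of `F` over `Ω₁` with value `Fstar`, `ε > 0`, `x ∈ Ω₁` with `x ∉ S_ε`, `xdag` the
projection of `x` onto `S_ε`, `v ∈ ∂F(xdag)`, and `ζ > 0` satisfying the optimality
condition `⟨xdag - x + ζ v, z - xdag⟩ ≥ 0` for all `z ∈ Ω₁`, one has
`ζ ≤ dist(xdag, Ω*) ‖xdag - x‖ / ε`. -/
theorem lagrange_multiplier_bound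
    {d : ℕ} (Ω₁ : Set (EuclideanSpace ℝ (Fin d)))
    (hΩ₁closed : IsClosed Ω₁) (hΩ₁conv : Convex ℝ Ω₁)
    (F : EuclideanSpace ℝ (Fin d) → ℝ)
    (hF : ConvexOn ℝ Ω₁ F)
    (Ωstar : Set (EuclideanSpace ℝ (Fin d))) (Fstar : ℝ)
    (hΩ : Ωstar = {z ∈ Ω₁ | ∀ y ∈ Ω₁, F z ≤ F y})
    (hΩne : Ωstar.Nonempty) (hΩconv : Convex ℝ Ωstar) (hΩcpt : IsCompact Ωstar)
    (hFstar : ∀ z ∈ Ωstar, F z = Fstar)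
    (ε : ℝ) (hε : 0 < ε)
    (x : EuclideanSpace ℝ (Fin d)) (hxΩ₁ : x ∈ Ω₁)
    (hxnot : ¬ (F x ≤ Fstar + ε))
    (xdag : EuclideanSpace ℝ (Fin d))
    (hdagΩ₁ : xdag ∈ Ω₁) (hdagmem : F xdag ≤ Fstar + ε)
    (hproj : ∀ z ∈ Ω₁, F z ≤ Fstar + ε → ‖xdag - x‖ ≤ ‖z - x‖)
    (v : EuclideanSpace ℝ (Fin d))
    (hv : ∀ y ∈ Ω₁, F y ≥ F xdag + ⟪v, y - xdag⟫)
    (ζ : ℝ) (hζ : 0 < ζ)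
    (hopt : ∀ z ∈ Ω₁, 0 ≤ ⟪xdag - x + ζ • v, z - xdag⟫) :
    ζ ≤ Metric.infDist xdag Ωstar * ‖xdag - x‖ / ε := by
  -- x* : nearest point of Ωstar to xdag
  obtain ⟨xs, hxs, hxsd⟩ := hΩcpt.exists_infDist_eq_dist hΩne xdag
  have hxsΩ₁ : xs ∈ Ω₁ := by rw [hΩ] at hxs; exact hxs.1
  have hFxs : F xs = Fstar := hFstar xs hxs
  -- F xdag = Fstar + ε
  have hne : xdag ≠ x := by
    rintro rfl; exact hxnot hdagmem
  have hFdag : F xdag = Fstar + ε := by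
    by_contra h
    have hlt : F xdag < Fstar + ε := lt_of_le_of_ne hdagmem h
    have hFx : Fstar + ε < F x := not_le.mp hxnot
    -- choose t small
    set t : ℝ := min (1/2) ((Fstar + ε - F xdag) / (F x - F xdag)) with ht
    have hden : 0 < F x - F xdag := by linarith
    have ht0 : 0 < t := lt_min (by norm_num) (div_pos (by linarith) hden)
    have ht1 : t < 1 := lt_of_le_of_lt (min_le_left _ _) (by norm_num)
    have htle : t ≤ (Fstar + ε - F xdag) / (F x - F xdag) := min_le_right _ _
    set z := (1 - t) • xdag + t • x with hz
    have hzΩ₁ : z ∈ Ω₁ := hΩ₁conv hdagΩ₁ hxΩ₁ (by linarith) ht0.le (by ring)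
    have hFz : F z ≤ Fstar + ε := by
      have := hF.2 hdagΩ₁ hxΩ₁ (show (0:ℝ) ≤ 1 - t by linarith) ht0.le (by ring)
      have h2 : t * (F x - F xdag) ≤ Fstar + ε - F xdag := by
        rw [le_div_iff₀ hden] at htle; linarith
      simp only [smul_eq_mul] at this
      rw [hz]; nlinarith [this]
    have := hproj z hzΩ₁ hFz
    have hzx : z - x = (1 - t) • (xdag - x) := by
      simp [hz, sub_smul, smul_sub]; module
    rw [hzx, norm_smul] at this
    have hnorm : 0 < ‖xdag - x‖ := by
      simpa [sub_eq_zero] using norm_sub_pos_iff.mpr hne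
    have : ‖xdag - x‖ ≤ |1 - t| * ‖xdag - x‖ := by simpa using this
    rw [abs_of_pos (by linarith)] at this
    nlinarith
  -- subgradient at xs
  have hsub : ⟪v, xs - xdag⟫ ≤ -ε := by
    have := hv xs hxsΩ₁
    rw [hFxs, hFdag] at this
    linarith
  have hop := hopt xs hxsΩ₁
  rw [inner_add_left, real_inner_smul_left] at hop
  have hcs : ⟪xdag - x, xs - xdag⟫ ≤ ‖xdag - x‖ * ‖xs - xdag‖ := real_inner_le_norm _ _
  have hdist : ‖xs - xdag‖ = Metric.infDist xdag Ωstar := by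
    rw [hxsd, dist_eq_norm, norm_sub_rev]
  rw [hdist] at hcs
  have h1 : ζ * ⟪v, xs - xdag⟫ ≤ ζ * (-ε) :=
    mul_le_mul_of_nonneg_left hsub hζ.le
  rw [le_div_iff₀ hε]
  nlinarith [mul_comm (Metric.infDist xdag Ωstar) ‖xdag - x‖]
end
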